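/- arXiv:1206.0489 — 4 statements merged into one kernel-verified Lean document; each statement's English description precedes it below -/
import Mathlib

section
/- Ruzsa triangle inequality for differential entropy: If X, Y, Z are independent real-valued continuous random variables (each having a probability density function) whose differential entropies h(X-Z), h(X-Y), h(Y-Z), h(Y) all exist and are finite, then h(X-Z) ≤ h(X-Y) + h(Y-Z) - h(Y). -/
/-!
With `f, g, k, q` the densities of `X - Z, X - Y, Y - Z, Y`, the difference
`h(X - Y) + h(Y - Z) - h(Y) - h(X - Z)` is `-E[log R]` for the ratio
`R = g(X - Y) k(Y - Z) / f(X - Z) / q(Y)`, so by `log t ≤ t - 1` it suffices that `E[R] ≤ 1`.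
As `Y` is independent of `(X, Z)`, integrating out `Y` against its density cancels `q(Y)` and
leaves `(k ⋆ g)(X - Z) / f(X - Z)`; integrating that against the law of `X - Z`, whose density
is `f`, leaves at most `∫ k ⋆ g = ∫ k * ∫ g ≤ 1`.
-/

open MeasureTheory ProbabilityTheory

/-- The differential entropy of a random variable `X` (with respect to a reference
measure `μ` on the value space, typically Lebesgue measure): if `f` is the density of
the law of `X` with respect to `μ`, then `h(X) = -E[log f(X)]`. -/
noncomputable def dent {Ω E : Type*} [MeasurableSpace Ω] [MeasurableSpace E]
    (μ : Measure E) (P : Measure Ω) (X : Ω → E) : ℝ :=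
  -∫ x, Real.log (((P.map X).rnDeriv μ x).toReal) ∂(P.map X)

/-- `X` is a continuous random variable (its law is absolutely continuous with respect
to the reference measure `μ`, i.e. it has a density `f`), and its differential entropy
exists and is finite (the log-density is integrable under the law of `X`). -/
def FiniteDent {Ω E : Type*} [MeasurableSpace Ω] [MeasurableSpace E]
    (μ : Measure E) (P : Measure Ω) (X : Ω → E) : Prop :=
  P.map X ≪ μ ∧
    Integrable (fun x => Real.log (((P.map X).rnDeriv μ x).toReal)) (P.map X)

open scoped ENNReal

section Convolution

variable {G : Type*} [MeasurableSpace G] {μ : Measure G}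

theorem lintegral_lconvolution [AddGroup G] [MeasurableAdd₂ G] [MeasurableNeg G] [SFinite μ]
    [μ.IsAddLeftInvariant] {f g : G → ℝ≥0∞} (hf : Measurable f) (hg : Measurable g) :
    ∫⁻ x, (f ⋆ₗ[μ] g) x ∂μ = (∫⁻ x, f x ∂μ) * ∫⁻ x, g x ∂μ := by
  simp_rw [lconvolution_def]
  rw [lintegral_lintegral_swap (by fun_prop), ← lintegral_mul_const _ hf]
  refine lintegral_congr fun y => ?_
  rw [lintegral_const_mul _ (by fun_prop), lintegral_add_left_eq_self g (-y)]

theorem lconvolution_sub_apply [AddCommGroup G] [MeasurableAdd G] [μ.IsAddRightInvariant]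
    (f g : G → ℝ≥0∞) (x z : G) :
    (f ⋆ₗ[μ] g) (x - z) = ∫⁻ y, f (y - z) * g (x - y) ∂μ := by
  rw [lconvolution_def, ← lintegral_sub_right_eq_self _ z]
  congr with y
  congr 2
  abel

end Convolution

theorem lintegral_div_rnDeriv_le {α : Type*} [MeasurableSpace α] {ν μ : Measure α}
    [ν.HaveLebesgueDecomposition μ] (hνμ : ν ≪ μ) (A : α → ℝ≥0∞) :
    ∫⁻ x, A x / ν.rnDeriv μ x ∂ν ≤ ∫⁻ x, A x ∂μ := by
  calc ∫⁻ x, A x / ν.rnDeriv μ x ∂ν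
      = ∫⁻ x, A x / ν.rnDeriv μ x ∂(μ.withDensity (ν.rnDeriv μ)) := by
        rw [Measure.withDensity_rnDeriv_eq ν μ hνμ]
    _ ≤ ∫⁻ x, ν.rnDeriv μ x * (A x / ν.rnDeriv μ x) ∂μ :=
        lintegral_withDensity_le_lintegral_mul μ (Measure.measurable_rnDeriv ν μ) _
    _ ≤ ∫⁻ x, A x ∂μ := lintegral_mono fun x => ENNReal.mul_div_le

theorem ProbabilityTheory.IndepFun.lintegral_comp_eq_lintegral_lintegral_map {Ω α β : Type*}
    [MeasurableSpace Ω] [MeasurableSpace α] [MeasurableSpace β]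
    {P : Measure Ω} [IsFiniteMeasure P] {U : Ω → α} {V : Ω → β} (hUV : IndepFun U V P)
    (hU : Measurable U) (hV : Measurable V)
    {φ : α × β → ℝ≥0∞} (hφ : Measurable φ) :
    ∫⁻ ω, φ (U ω, V ω) ∂P = ∫⁻ ω, ∫⁻ v, φ (U ω, v) ∂(P.map V) ∂P := by
  rw [← lintegral_map hφ (hU.prodMk hV),
    (indepFun_iff_map_prod_eq_prod_map_map hU.aemeasurable hV.aemeasurable).mp hUV,
    lintegral_prod _ hφ.aemeasurable, lintegral_map _ hU]
  exact hφ.lintegral_prod_right'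

theorem lintegral_pdf_le_one {Ω E : Type*} [MeasurableSpace Ω] [MeasurableSpace E]
    {P : Measure Ω} [IsProbabilityMeasure P] {W : Ω → E} (hW : AEMeasurable W P)
    (μ : Measure E) : ∫⁻ x, pdf W P μ x ∂μ ≤ 1 := by
  have := Measure.isProbabilityMeasure_map hW
  exact Measure.lintegral_rnDeriv_le.trans_eq measure_univ

theorem lintegral_ruzsa_ratio_le_one {Ω G : Type*} [MeasurableSpace Ω] [AddCommGroup G]
    [MeasurableSpace G] [MeasurableAdd₂ G] [MeasurableNeg G] (μ : Measure G) [SigmaFinite μ]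
    [μ.IsAddLeftInvariant] (P : Measure Ω) [IsProbabilityMeasure P] {X Y Z : Ω → G}
    (hX : Measurable X) (hY : Measurable Y) (hZ : Measurable Z)
    (hind : IndepFun (fun ω => (X ω, Z ω)) Y P)
    (hXZ : P.map (X - Z) ≪ μ) (hY' : P.map Y ≪ μ) :
    ∫⁻ ω, pdf (X - Y) P μ ((X - Y) ω) * pdf (Y - Z) P μ ((Y - Z) ω)
      / pdf (X - Z) P μ ((X - Z) ω) / pdf Y P μ (Y ω) ∂P ≤ 1 := by
  set f := pdf (X - Z) P μ
  set g := pdf (X - Y) P μ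
  set k := pdf (Y - Z) P μ
  set q := pdf Y P μ
  have hf : Measurable f := measurable_pdf _ _ _
  have hg : Measurable g := measurable_pdf _ _ _
  have hk : Measurable k := measurable_pdf _ _ _
  calc ∫⁻ ω, g (X ω - Y ω) * k (Y ω - Z ω) / f (X ω - Z ω) / q (Y ω) ∂P
    _ = ∫⁻ ω, ∫⁻ y, g (X ω - y) * k (y - Z ω) / f (X ω - Z ω) / q y ∂(P.map Y) ∂P :=
        hind.lintegral_comp_eq_lintegral_lintegral_map (hX.prodMk hZ) hY
          (φ := fun p => g (p.1.1 - p.2) * k (p.2 - p.1.2) / f (p.1.1 - p.1.2) / q p.2)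
          (by fun_prop)
    _ ≤ ∫⁻ ω, ∫⁻ y, g (X ω - y) * k (y - Z ω) / f (X ω - Z ω) ∂μ ∂P :=
        lintegral_mono fun ω => lintegral_div_rnDeriv_le hY' _
    _ = ∫⁻ ω, (k ⋆ₗ[μ] g) (X ω - Z ω) / f (X ω - Z ω) ∂P := by
        congr with ω
        simp_rw [div_eq_mul_inv]
        rw [lintegral_mul_const, lconvolution_sub_apply]
        · simp_rw [mul_comm (g _)]
        · fun_prop
    _ = ∫⁻ w, (k ⋆ₗ[μ] g) w / f w ∂(P.map (X - Z)) :=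
        (lintegral_map ((measurable_lconvolution μ hk hg).div hf) (hX.sub hZ)).symm
    _ ≤ ∫⁻ w, (k ⋆ₗ[μ] g) w ∂μ := lintegral_div_rnDeriv_le hXZ _
    _ = (∫⁻ w, k w ∂μ) * ∫⁻ w, g w ∂μ := lintegral_lconvolution hk hg
    _ ≤ 1 := mul_le_one' (lintegral_pdf_le_one (hY.sub hZ).aemeasurable μ)
          (lintegral_pdf_le_one (hX.sub hY).aemeasurable μ)

theorem integral_log_toReal_nonpos {Ω : Type*} [MeasurableSpace Ω] {P : Measure Ω}
    [IsProbabilityMeasure P] {R : Ω → ℝ≥0∞} (hR : AEMeasurable R P)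
    (hle : ∫⁻ ω, R ω ∂P ≤ 1) (hpos : ∀ᵐ ω ∂P, 0 < (R ω).toReal) :
    ∫ ω, Real.log (R ω).toReal ∂P ≤ 0 := by
  by_cases hlog : Integrable (fun ω => Real.log (R ω).toReal) P
  swap
  · rw [integral_undef hlog]
  have hfin : ∫⁻ ω, R ω ∂P ≠ ⊤ := (hle.trans_lt ENNReal.one_lt_top).ne
  have hint : Integrable (fun ω => (R ω).toReal) P :=
    integrable_toReal_of_lintegral_ne_top hR hfin
  have hint_le : ∫ ω, (R ω).toReal ∂P ≤ 1 := by
    rw [integral_toReal hR (ae_lt_top' hR hfin)]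
    exact ENNReal.toReal_le_of_le_ofReal zero_le_one (by simpa using hle)
  calc ∫ ω, Real.log (R ω).toReal ∂P
      ≤ ∫ ω, ((R ω).toReal - 1) ∂P :=
        integral_mono_ae hlog (hint.sub (integrable_const 1))
          (hpos.mono fun ω h => Real.log_le_sub_one_of_pos h)
    _ = ∫ ω, (R ω).toReal ∂P - 1 := by simp [integral_sub hint (integrable_const 1)]
    _ ≤ 0 := by linarith

theorem ENNReal.log_toReal_mul_div_div {a b c d : ℝ≥0∞} (ha : 0 < a.toReal)
    (hb : 0 < b.toReal) (hc : 0 < c.toReal) (hd : 0 < d.toReal) :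
    Real.log (a * b / c / d).toReal
      = Real.log a.toReal + Real.log b.toReal - Real.log c.toReal - Real.log d.toReal := by
  simp only [ENNReal.toReal_div, ENNReal.toReal_mul]
  rw [Real.log_div (by positivity) hd.ne', Real.log_div (by positivity) hc.ne',
    Real.log_mul ha.ne' hb.ne']

section DifferentialEntropy

variable {Ω E : Type*} [MeasurableSpace Ω] [MeasurableSpace E] {μ : Measure E} {P : Measure Ω}
  {W : Ω → E}

theorem measurable_log_toReal_pdf (W : Ω → E) (P : Measure Ω) (μ : Measure E) :
    Measurable fun x => Real.log (pdf W P μ x).toReal :=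
  Real.measurable_log.comp (measurable_pdf W P μ).ennreal_toReal

theorem dent_eq_neg_integral_log_pdf_comp (hW : AEMeasurable W P) :
    dent μ P W = -∫ ω, Real.log (pdf W P μ (W ω)).toReal ∂P :=
  congrArg Neg.neg (integral_map hW (measurable_log_toReal_pdf W P μ).aestronglyMeasurable)

theorem FiniteDent.integrable_log_pdf_comp (h : FiniteDent μ P W) (hW : AEMeasurable W P) :
    Integrable (fun ω => Real.log (pdf W P μ (W ω)).toReal) P :=
  (integrable_map_measure (measurable_log_toReal_pdf W P μ).aestronglyMeasurable hW).mp h.2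

theorem ae_toReal_pdf_comp_pos [IsFiniteMeasure P] [SigmaFinite μ] (hW : AEMeasurable W P)
    (hac : P.map W ≪ μ) : ∀ᵐ ω ∂P, 0 < (pdf W P μ (W ω)).toReal :=
  ae_of_ae_map hW <| by
    filter_upwards [Measure.rnDeriv_pos hac, hac.ae_le (Measure.rnDeriv_lt_top (P.map W) μ)]
      with x hpos hfin using ENNReal.toReal_pos hpos.ne' hfin.ne

end DifferentialEntropy

/-- **Ruzsa triangle inequality for differential entropy.**
If `X, Y, Z` are independent continuous random variables whose differential entropies
`h(X-Z), h(X-Y), h(Y-Z), h(Y)` all exist and are finite, then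
`h(X-Z) ≤ h(X-Y) + h(Y-Z) - h(Y)`. -/
theorem ruzsa_triangle_diffEntropy
    {Ω : Type*} [MeasurableSpace Ω] (P : Measure Ω) [IsProbabilityMeasure P]
    (X Y Z : Ω → ℝ) (hX : Measurable X) (hY : Measurable Y) (hZ : Measurable Z)
    (hindep : iIndepFun ![X, Y, Z] P)
    (hXZ : FiniteDent volume P (X - Z)) (hXY : FiniteDent volume P (X - Y))
    (hYZ : FiniteDent volume P (Y - Z)) (hY' : FiniteDent volume P Y) :
    dent volume P (X - Z) ≤ dent volume P (X - Y) + dent volume P (Y - Z) - dent volume P Y := by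
  have hXZm : AEMeasurable (X - Z) P := (hX.sub hZ).aemeasurable
  have hXYm : AEMeasurable (X - Y) P := (hX.sub hY).aemeasurable
  have hYZm : AEMeasurable (Y - Z) P := (hY.sub hZ).aemeasurable
  have hind : IndepFun (fun ω => (X ω, Z ω)) Y P :=
    hindep.indepFun_prodMk (by simp [Fin.forall_fin_succ, *]) 0 2 1 (by decide) (by decide)
  set logpdf : (Ω → ℝ) → Ω → ℝ := fun W ω => Real.log (pdf W P volume (W ω)).toReal
  set R : Ω → ℝ≥0∞ := fun ω => pdf (X - Y) P volume ((X - Y) ω)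
    * pdf (Y - Z) P volume ((Y - Z) ω) / pdf (X - Z) P volume ((X - Z) ω) / pdf Y P volume (Y ω)
  have hpos := (ae_toReal_pdf_comp_pos hXYm hXY.1).and <|
    (ae_toReal_pdf_comp_pos hYZm hYZ.1).and <|
    (ae_toReal_pdf_comp_pos hXZm hXZ.1).and (ae_toReal_pdf_comp_pos hY.aemeasurable hY'.1)
  have hRpos : ∀ᵐ ω ∂P, 0 < (R ω).toReal := hpos.mono fun ω ⟨ha, hb, hc, hd⟩ => by
    simp only [R, ENNReal.toReal_div, ENNReal.toReal_mul]
    positivity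
  have hlogR : (fun ω => Real.log (R ω).toReal)
      =ᵐ[P] logpdf (X - Y) + logpdf (Y - Z) - logpdf (X - Z) - logpdf Y :=
    hpos.mono fun ω ⟨ha, hb, hc, hd⟩ => ENNReal.log_toReal_mul_div_div ha hb hc hd
  have hgibbs : ∫ ω, Real.log (R ω).toReal ∂P ≤ 0 :=
    integral_log_toReal_nonpos (by fun_prop)
      (lintegral_ruzsa_ratio_le_one volume P hX hY hZ hind hXZ.1 hY'.1) hRpos
  have hiXZ := hXZ.integrable_log_pdf_comp hXZm
  have hiXY := hXY.integrable_log_pdf_comp hXYm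
  have hiYZ := hYZ.integrable_log_pdf_comp hYZm
  have hiY := hY'.integrable_log_pdf_comp hY.aemeasurable
  rw [integral_congr_ae hlogR, integral_sub' ((hiXY.add hiYZ).sub hiXZ) hiY,
    integral_sub' (hiXY.add hiYZ) hiXZ, integral_add' hiXY hiYZ] at hgibbs
  rw [dent_eq_neg_integral_log_pdf_comp hXZm, dent_eq_neg_integral_log_pdf_comp hXYm,
    dent_eq_neg_integral_log_pdf_comp hYZm, dent_eq_neg_integral_log_pdf_comp hY.aemeasurable]
  linarith
end

section
/- Doubling-difference inequality (upper bound): If X1, X2 are independent and identically distributed real-valued continuous random variables with all relevant differential entropies existing and finite, then h(X1+X2) - h(X1) ≤ 2·(h(X1-X2) - h(X1)). -/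
open MeasureTheory ProbabilityTheory

/-!
With `X₃` an independent copy of `X₁`, the inequality is the entropic Ruzsa triangle inequality
`h(X + Y) + h(Z) ≤ h(X + Z) + h(Y + Z)` for independent `X, Y, Z`, applied to
`X = X₁, Y = X₂, Z = -X₃`, together with `h(-X₃) = h(X₁)`.

The Ruzsa inequality is the sum of `h(X + Y) ≤ h(X + Y + Z)` and the submodularity inequality
`h(X + Y + Z) + h(Z) ≤ h(X + Z) + h(Y + Z)`. Both are Gibbs inequalities `E[log R] ≤ 0` for a
ratio `R` of densities with `E[R] ≤ 1`. Since `h(X + Y + Z)` need not be finite, each of them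
only says that an expectation is nonnegative in `(-∞, ∞]`; this is still enough to add them,
and the `h(X + Y + Z)` terms cancel pointwise.
-/

open scoped ENNReal

namespace ENNReal

lemma ofReal_add_ofReal_neg_eq (x y : ℝ) :
    ENNReal.ofReal (x + y) + ENNReal.ofReal (-x) + ENNReal.ofReal (-y) =
      ENNReal.ofReal (-(x + y)) + ENNReal.ofReal x + ENNReal.ofReal y := by
  rw [← ENNReal.toReal_eq_toReal_iff' (by finiteness) (by finiteness)]
  simp only [ENNReal.toReal_add, ne_eq, ENNReal.ofReal_ne_top, not_false_eq_true,
    ENNReal.add_ne_top, and_self, ENNReal.toReal_ofReal']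
  linarith [max_zero_sub_eq_self (x + y), max_zero_sub_eq_self x, max_zero_sub_eq_self y]

lemma ofReal_add_one_le_ofReal_exp_add (x : ℝ) :
    ENNReal.ofReal x + 1 ≤ ENNReal.ofReal (Real.exp x) + ENNReal.ofReal (-x) := by
  rcases le_total 0 x with hx | hx
  · rw [ENNReal.ofReal_of_nonpos (neg_nonpos.2 hx), add_zero, ← ENNReal.ofReal_one,
      ← ENNReal.ofReal_add hx zero_le_one]
    exact ENNReal.ofReal_le_ofReal (by linarith [Real.add_one_le_exp x])
  · rw [ENNReal.ofReal_of_nonpos hx, zero_add, ← ENNReal.ofReal_one,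
      ← ENNReal.ofReal_add (Real.exp_pos x).le (neg_nonneg.2 hx)]
    exact ENNReal.ofReal_le_ofReal (by linarith [Real.add_one_le_exp x])

lemma mul_div_mul_right_le (a b c : ℝ≥0∞) : c * (a / (b * c)) ≤ a / b := by
  rcases eq_or_ne c 0 with rfl | hc0
  · simp
  rcases eq_or_ne c ∞ with rfl | hc
  · rcases eq_or_ne b 0 with rfl | hb0
    · rcases eq_or_ne a 0 with rfl | ha0 <;> simp [*, ENNReal.div_zero]
    · simp [hb0]
  · rw [← mul_div_assoc, mul_comm c, ENNReal.mul_div_mul_right _ _ hc0 hc]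

end ENNReal

section ExtIntegral

variable {W W' : Type*} [MeasurableSpace W] [MeasurableSpace W'] {Q : Measure W}

/-- `0 ≤ ∫ L ∂Q` for an `L` whose integral exists in `(-∞, ∞]`. -/
def ExtIntegralNonneg (Q : Measure W) (L : W → ℝ) : Prop :=
  ∫⁻ w, ENNReal.ofReal (-L w) ∂Q ≠ ∞ ∧
    ∫⁻ w, ENNReal.ofReal (-L w) ∂Q ≤ ∫⁻ w, ENNReal.ofReal (L w) ∂Q

namespace ExtIntegralNonneg

variable {L L₁ L₂ : W → ℝ}

lemma congr (h : ExtIntegralNonneg Q L₁) (h₁₂ : L₁ =ᵐ[Q] L₂) : ExtIntegralNonneg Q L₂ := by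
  have hneg : ∫⁻ w, ENNReal.ofReal (-L₁ w) ∂Q = ∫⁻ w, ENNReal.ofReal (-L₂ w) ∂Q :=
    lintegral_congr_ae (h₁₂.mono fun w hw => by simp only [hw])
  have hpos : ∫⁻ w, ENNReal.ofReal (L₁ w) ∂Q = ∫⁻ w, ENNReal.ofReal (L₂ w) ∂Q :=
    lintegral_congr_ae (h₁₂.mono fun w hw => by simp only [hw])
  exact ⟨hneg ▸ h.1, hneg ▸ hpos ▸ h.2⟩

lemma comp {Q' : Measure W'} {L : W' → ℝ} {φ : W → W'} (h : ExtIntegralNonneg Q' L)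
    (hφ : MeasurePreserving φ Q Q') (hL : Measurable L) : ExtIntegralNonneg Q (L ∘ φ) := by
  have hneg := hφ.lintegral_comp (ENNReal.measurable_ofReal.comp hL.neg)
  have hpos := hφ.lintegral_comp (ENNReal.measurable_ofReal.comp hL)
  simp only [Function.comp_apply, Pi.neg_apply] at hneg hpos
  exact ⟨by simpa [hneg] using h.1, by simpa [hneg, hpos] using h.2⟩

lemma add (h₁ : ExtIntegralNonneg Q L₁) (h₂ : ExtIntegralNonneg Q L₂)
    (hm₁ : AEMeasurable L₁ Q) (hm₂ : AEMeasurable L₂ Q) : ExtIntegralNonneg Q (L₁ + L₂) := by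
  have pos : ∀ {L : W → ℝ}, AEMeasurable L Q → AEMeasurable (fun w => ENNReal.ofReal (L w)) Q :=
    fun hL => ENNReal.measurable_ofReal.comp_aemeasurable hL
  have neg : ∀ {L : W → ℝ}, AEMeasurable L Q → AEMeasurable (fun w => ENNReal.ofReal (-L w)) Q :=
    fun hL => pos hL.neg
  have add₃ : ∀ {a b c : W → ℝ≥0∞}, AEMeasurable a Q → AEMeasurable b Q →
      ∫⁻ w, a w + b w + c w ∂Q = ∫⁻ w, a w ∂Q + ∫⁻ w, b w ∂Q + ∫⁻ w, c w ∂Q := fun ha hb => by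
    rw [lintegral_add_left' (f := fun w => _ + _) (ha.add hb), lintegral_add_left' ha]
  have hm : AEMeasurable (fun w => L₁ w + L₂ w) Q := hm₁.add hm₂
  have hN : ∫⁻ w, ENNReal.ofReal (-L₁ w) ∂Q + ∫⁻ w, ENNReal.ofReal (-L₂ w) ∂Q ≠ ∞ :=
    ENNReal.add_ne_top.2 ⟨h₁.1, h₂.1⟩
  simp only [ExtIntegralNonneg, Pi.add_apply]
  have hneg : ∫⁻ w, ENNReal.ofReal (-(L₁ w + L₂ w)) ∂Q ≤
      ∫⁻ w, ENNReal.ofReal (-L₁ w) ∂Q + ∫⁻ w, ENNReal.ofReal (-L₂ w) ∂Q := by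
    rw [← lintegral_add_left' (neg hm₁)]
    exact lintegral_mono fun w => by simpa only [neg_add] using ENNReal.ofReal_add_le
  -- integrate `(L₁ + L₂)⁺ + L₁⁻ + L₂⁻ = (L₁ + L₂)⁻ + L₁⁺ + L₂⁺`, then cancel the finite `L₁⁻ + L₂⁻`
  have hsplit := lintegral_congr (μ := Q) fun w => ENNReal.ofReal_add_ofReal_neg_eq (L₁ w) (L₂ w)
  rw [add₃ (pos hm) (neg hm₁), add₃ (neg hm) (pos hm₁), add_assoc, add_assoc] at hsplit
  refine ⟨ne_top_of_le_ne_top hN hneg, (ENNReal.add_le_add_iff_right hN).1 ?_⟩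
  exact (add_le_add_right (add_le_add h₁.2 h₂.2) _).trans_eq hsplit.symm

lemma integral_nonneg (h : ExtIntegralNonneg Q L) (hi : Integrable L Q) : 0 ≤ ∫ w, L w ∂Q := by
  rw [integral_eq_lintegral_pos_part_sub_lintegral_neg_part hi, sub_nonneg]
  exact ENNReal.toReal_mono hi.lintegral_lt_top.ne h.2

end ExtIntegralNonneg

lemma extIntegralNonneg_log_sub_log [IsProbabilityMeasure Q] {a b : W → ℝ≥0∞}
    (hma : AEMeasurable a Q) (hmb : AEMeasurable b Q) (ha : ∀ᵐ w ∂Q, a w ≠ 0 ∧ a w ≠ ∞)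
    (hb : ∀ᵐ w ∂Q, b w ≠ 0 ∧ b w ≠ ∞) (hab : ∫⁻ w, b w / a w ∂Q ≤ 1) :
    ExtIntegralNonneg Q (fun w => Real.log (a w).toReal - Real.log (b w).toReal) := by
  set L := fun w => Real.log (a w).toReal - Real.log (b w).toReal
  have hexp : ∀ᵐ w ∂Q, b w / a w = ENNReal.ofReal (Real.exp (-L w)) := by
    filter_upwards [ha, hb] with w ⟨ha0, hatop⟩ ⟨hb0, hbtop⟩
    have hA := ENNReal.toReal_pos ha0 hatop
    have hB := ENNReal.toReal_pos hb0 hbtop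
    rw [neg_sub, Real.exp_sub, Real.exp_log hA, Real.exp_log hB, ENNReal.ofReal_div_of_pos hA,
      ENNReal.ofReal_toReal hatop, ENNReal.ofReal_toReal hbtop]
  have hneg : ∫⁻ w, ENNReal.ofReal (-L w) ∂Q ≤ 1 := by
    refine le_trans (lintegral_mono_ae ?_) hab
    filter_upwards [hexp] with w hw
    rw [hw]
    exact ENNReal.ofReal_le_ofReal (by linarith [Real.add_one_le_exp (-L w)])
  refine ⟨ne_top_of_le_ne_top ENNReal.one_ne_top hneg, ?_⟩
  refine (ENNReal.add_le_add_iff_right ENNReal.one_ne_top).1 ?_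
  calc ∫⁻ w, ENNReal.ofReal (-L w) ∂Q + 1 = ∫⁻ w, (ENNReal.ofReal (-L w) + 1) ∂Q := by
        rw [lintegral_add_right _ measurable_const, lintegral_const, measure_univ, mul_one]
    _ ≤ ∫⁻ w, (b w / a w + ENNReal.ofReal (L w)) ∂Q := by
        refine lintegral_mono_ae ?_
        filter_upwards [hexp] with w hw
        simpa [hw] using ENNReal.ofReal_add_one_le_ofReal_exp_add (-L w)
    _ = ∫⁻ w, b w / a w ∂Q + ∫⁻ w, ENNReal.ofReal (L w) ∂Q := lintegral_add_left' (hmb.div hma) _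
    _ ≤ _ := by rw [add_comm]; gcongr

end ExtIntegral

lemma MeasureTheory.MeasurePreserving.integral_comp_of_aestronglyMeasurable {Ω E : Type*}
    [MeasurableSpace Ω] [MeasurableSpace E] {P : Measure Ω} {ν : Measure E} {φ : Ω → E}
    (hφ : MeasurePreserving φ P ν) {g : E → ℝ} (hg : AEStronglyMeasurable g ν) :
    ∫ x, g (φ x) ∂P = ∫ y, g y ∂ν := by
  rw [← integral_map hφ.measurable.aemeasurable (hφ.map_eq ▸ hg), hφ.map_eq]

section Density

variable {E : Type*} [MeasurableSpace E]

noncomputable def logDensity (μ ν : Measure E) (x : E) : ℝ :=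
  Real.log (ν.rnDeriv μ x).toReal

noncomputable def entropy (μ ν : Measure E) : ℝ :=
  -∫ x, logDensity μ ν x ∂ν

lemma measurable_logDensity (μ ν : Measure E) : Measurable (logDensity μ ν) :=
  Real.measurable_log.comp (Measure.measurable_rnDeriv ν μ).ennreal_toReal

variable {μ ν : Measure E} [SigmaFinite μ] [SigmaFinite ν]

lemma ae_rnDeriv_ne_zero_ne_top (hν : ν ≪ μ) :
    ∀ᵐ x ∂ν, ν.rnDeriv μ x ≠ 0 ∧ ν.rnDeriv μ x ≠ ∞ := by
  filter_upwards [Measure.rnDeriv_pos hν, hν.ae_le (Measure.rnDeriv_ne_top ν μ)] with x h0 htop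
  exact ⟨h0.ne', htop⟩

lemma lintegral_le_of_rnDeriv_mul_le (hν : ν ≪ μ) {F H : E → ℝ≥0∞}
    (hFH : ∀ x, ν.rnDeriv μ x * F x ≤ H x) : ∫⁻ x, F x ∂ν ≤ ∫⁻ x, H x ∂μ := by
  conv_lhs => rw [← Measure.withDensity_rnDeriv_eq ν μ hν]
  exact (lintegral_withDensity_le_lintegral_mul μ (Measure.measurable_rnDeriv ν μ) F).trans
    (lintegral_mono hFH)

lemma logDensity_map_comp_ae_eq (e : E ≃ᵐ E) (he : MeasurePreserving e μ μ) (hν : ν ≪ μ) :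
    (fun x => logDensity μ (ν.map e) (e x)) =ᵐ[ν] logDensity μ ν := by
  have h := e.measurableEmbedding.rnDeriv_map ν μ
  rw [he.map_eq] at h
  filter_upwards [hν.ae_le h] with x hx
  simp only [logDensity, hx]

lemma entropy_map_eq (e : E ≃ᵐ E) (he : MeasurePreserving e μ μ) (hν : ν ≪ μ) :
    entropy μ (ν.map e) = entropy μ ν := by
  rw [entropy, entropy, integral_map_equiv, integral_congr_ae (logDensity_map_comp_ae_eq e he hν)]

lemma integrable_logDensity_map_iff (e : E ≃ᵐ E) (he : MeasurePreserving e μ μ) (hν : ν ≪ μ) :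
    Integrable (logDensity μ (ν.map e)) (ν.map e) ↔ Integrable (logDensity μ ν) ν := by
  rw [integrable_map_equiv]
  exact integrable_congr (logDensity_map_comp_ae_eq e he hν)

end Density

section AddMonoid

variable {M : Type*} [AddMonoid M] [MeasurableSpace M] [MeasurableAdd₂ M]

lemma measurePreserving_add_conv (ν₁ ν₂ : Measure M) :
    MeasurePreserving (fun p : M × M => p.1 + p.2) (ν₁.prod ν₂) (ν₁ ∗ ν₂) :=
  ⟨measurable_add, rfl⟩

lemma measurePreserving_comp_fst_add_snd {Ω : Type*} [MeasurableSpace Ω] {P : Measure Ω}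
    [SFinite P] {ν ζ : Measure M} [SFinite ζ] {π : Ω → M} (hπ : MeasurePreserving π P ν) :
    MeasurePreserving (fun q : Ω × M => π q.1 + q.2) (P.prod ζ) (ν ∗ ζ) :=
  (measurePreserving_add_conv ν ζ).comp (hπ.prod (MeasurePreserving.id ζ))

end AddMonoid

lemma ProbabilityTheory.IndepFun.map_sub_eq_map_conv_map_neg {G : Type*} [AddGroup G]
    [MeasurableSpace G] [MeasurableAdd₂ G] [MeasurableNeg G] {Ω : Type*} [MeasurableSpace Ω]
    {P : Measure Ω} [IsFiniteMeasure P] {X Y : Ω → G} (hX : Measurable X) (hY : Measurable Y)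
    (hXY : IndepFun X Y P) : P.map (X - Y) = P.map X ∗ (P.map Y).map Neg.neg := by
  rw [sub_eq_add_neg, (hXY.comp measurable_id measurable_neg).map_add_eq_map_conv_map hX hY.neg,
    Measure.map_map measurable_neg hY]
  rfl

section Entropy

variable {G : Type*} [AddCommGroup G] [MeasurableSpace G] [MeasurableAdd₂ G]
variable {μ : Measure G} [SigmaFinite μ] [μ.IsAddLeftInvariant]

lemma extIntegralNonneg_logDensity_sub_logDensity_conv (σ ζ : Measure G)
    [IsProbabilityMeasure σ] [IsProbabilityMeasure ζ] (hσ : σ ≪ μ) (hτ : σ ∗ ζ ≪ μ) :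
    ExtIntegralNonneg (σ.prod ζ)
      (fun p => logDensity μ σ p.1 - logDensity μ (σ ∗ ζ) (p.1 + p.2)) := by
  set g := (σ ∗ ζ).rnDeriv μ
  have hg : Measurable g := Measure.measurable_rnDeriv _ _
  refine extIntegralNonneg_log_sub_log
    ((Measure.measurable_rnDeriv σ μ).comp measurable_fst).aemeasurable
    (hg.comp measurable_add).aemeasurable
    (measurePreserving_fst.quasiMeasurePreserving.ae (ae_rnDeriv_ne_zero_ne_top hσ))
    ((measurePreserving_add_conv σ ζ).quasiMeasurePreserving.ae (ae_rnDeriv_ne_zero_ne_top hτ)) ?_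
  calc ∫⁻ p, g (p.1 + p.2) / σ.rnDeriv μ p.1 ∂(σ.prod ζ)
      = ∫⁻ z, ∫⁻ x, g (x + z) / σ.rnDeriv μ x ∂σ ∂ζ :=
        lintegral_prod_symm _ ((hg.comp measurable_add).div
          ((Measure.measurable_rnDeriv σ μ).comp measurable_fst)).aemeasurable
    _ ≤ ∫⁻ z, ∫⁻ x, g (x + z) ∂μ ∂ζ :=
        lintegral_mono fun z => lintegral_le_of_rnDeriv_mul_le hσ fun x => ENNReal.mul_div_le
    _ = ∫⁻ _, 1 ∂ζ := by
        refine lintegral_congr fun z => ?_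
        rw [lintegral_add_right_eq_self g z, Measure.lintegral_rnDeriv hτ, measure_univ]
    _ = 1 := by simp

lemma lintegral_lintegral_rnDeriv_conv_ratio_le_one (α β ζ : Measure G) [IsFiniteMeasure α]
    [IsProbabilityMeasure β] [IsProbabilityMeasure ζ] (hζ : ζ ≪ μ) (x₁ : G) :
    ∫⁻ x₂, ∫⁻ z, (α ∗ ζ).rnDeriv μ (x₁ + z) * (β ∗ ζ).rnDeriv μ (x₂ + z) /
        (((α ∗ β) ∗ ζ).rnDeriv μ (x₁ + x₂ + z) * ζ.rnDeriv μ z) ∂ζ ∂β ≤ 1 := by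
  set d₁ := (α ∗ ζ).rnDeriv μ
  set d₂ := (β ∗ ζ).rnDeriv μ
  set g := ((α ∗ β) ∗ ζ).rnDeriv μ
  have hd₁ : Measurable d₁ := Measure.measurable_rnDeriv _ _
  have hsub : Measurable fun w : G => w - x₁ := by
    simpa only [sub_eq_add_neg] using measurable_add_const (-x₁)
  set H := fun w => d₂ (w - x₁) / g w
  have hH : Measurable H :=
    ((Measure.measurable_rnDeriv _ _).comp hsub).div (Measure.measurable_rnDeriv _ _)
  have hHβ : Measurable fun b => ∫⁻ x₂, H (b + x₂) ∂β :=
    (hH.comp measurable_add).lintegral_prod_right'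
  -- after the substitution `b = x₁ + z`, `d₁ b db` is the law `α ∗ ζ`, and adding an
  -- independent `x₂ ∼ β` to it gives the law `(α ∗ β) ∗ ζ`, whose density cancels that of `H`
  calc ∫⁻ x₂, ∫⁻ z, d₁ (x₁ + z) * d₂ (x₂ + z) / (g (x₁ + x₂ + z) * ζ.rnDeriv μ z) ∂ζ ∂β
      ≤ ∫⁻ x₂, ∫⁻ z, d₁ (x₁ + z) * H (x₁ + z + x₂) ∂μ ∂β := by
        refine lintegral_mono fun x₂ => lintegral_le_of_rnDeriv_mul_le hζ fun z => ?_
        have e₁ : x₁ + z + x₂ - x₁ = x₂ + z := by abel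
        have e₂ : x₁ + z + x₂ = x₁ + x₂ + z := by abel
        simp only [H]
        rw [e₁, e₂]
        exact (ENNReal.mul_div_mul_right_le _ _ _).trans_eq (mul_div_assoc _ _ _)
    _ = ∫⁻ x₂, ∫⁻ b, d₁ b * H (b + x₂) ∂μ ∂β :=
        lintegral_congr fun x₂ => lintegral_add_left_eq_self (fun b => d₁ b * H (b + x₂)) x₁
    _ = ∫⁻ b, d₁ b * ∫⁻ x₂, H (b + x₂) ∂β ∂μ := by
        rw [lintegral_lintegral_swap ((hd₁.comp measurable_snd).mul
          (hH.comp (measurable_snd.add measurable_fst))).aemeasurable]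
        exact lintegral_congr fun b => lintegral_const_mul _ (hH.comp (measurable_const_add b))
    _ = ∫⁻ w, H w ∂((α ∗ ζ) ∗ β) := by
        rw [Measure.lintegral_conv hH,
          lintegral_rnDeriv_mul (Measure.conv_absolutelyContinuous hζ) hHβ.aemeasurable]
    _ = ∫⁻ w, H w ∂((α ∗ β) ∗ ζ) := by
        rw [Measure.conv_assoc, Measure.conv_comm ζ β, ← Measure.conv_assoc]
    _ ≤ ∫⁻ w, d₂ (w - x₁) ∂μ :=
        lintegral_le_of_rnDeriv_mul_le (Measure.conv_absolutelyContinuous hζ) fun w =>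
          ENNReal.mul_div_le
    _ = 1 := by
        rw [lintegral_sub_right_eq_self d₂ x₁,
          Measure.lintegral_rnDeriv (Measure.conv_absolutelyContinuous hζ), measure_univ]

lemma lintegral_rnDeriv_conv_ratio_le_one (α β ζ : Measure G) [IsProbabilityMeasure α]
    [IsProbabilityMeasure β] [IsProbabilityMeasure ζ] (hζ : ζ ≪ μ) :
    ∫⁻ q, (α ∗ ζ).rnDeriv μ (q.1.1 + q.2) * (β ∗ ζ).rnDeriv μ (q.1.2 + q.2) /
        (((α ∗ β) ∗ ζ).rnDeriv μ (q.1.1 + q.1.2 + q.2) * ζ.rnDeriv μ q.2)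
      ∂((α.prod β).prod ζ) ≤ 1 := by
  have hF : Measurable fun q : (G × G) × G =>
      (α ∗ ζ).rnDeriv μ (q.1.1 + q.2) * (β ∗ ζ).rnDeriv μ (q.1.2 + q.2) /
        (((α ∗ β) ∗ ζ).rnDeriv μ (q.1.1 + q.1.2 + q.2) * ζ.rnDeriv μ q.2) := by
    fun_prop
  rw [lintegral_prod _ hF.aemeasurable, lintegral_prod _ hF.lintegral_prod_right'.aemeasurable]
  calc _ ≤ ∫⁻ _, 1 ∂α :=
        lintegral_mono (lintegral_lintegral_rnDeriv_conv_ratio_le_one α β ζ hζ)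
    _ = 1 := by simp

lemma extIntegralNonneg_logDensity_submodular (α β ζ : Measure G) [IsProbabilityMeasure α]
    [IsProbabilityMeasure β] [IsProbabilityMeasure ζ] (hζ : ζ ≪ μ) :
    ExtIntegralNonneg ((α.prod β).prod ζ) (fun q => logDensity μ ((α ∗ β) ∗ ζ) (q.1.1 + q.1.2 + q.2)
      + logDensity μ ζ q.2 - logDensity μ (α ∗ ζ) (q.1.1 + q.2)
      - logDensity μ (β ∗ ζ) (q.1.2 + q.2)) := by
  have pos : ∀ {ν : Measure G} [IsProbabilityMeasure ν] {φ : (G × G) × G → G},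
      MeasurePreserving φ ((α.prod β).prod ζ) ν → ν ≪ μ →
        ∀ᵐ q ∂((α.prod β).prod ζ), ν.rnDeriv μ (φ q) ≠ 0 ∧ ν.rnDeriv μ (φ q) ≠ ∞ :=
    fun hφ hν => hφ.quasiMeasurePreserving.ae (ae_rnDeriv_ne_zero_ne_top hν)
  have hT := pos (measurePreserving_comp_fst_add_snd (measurePreserving_add_conv α β))
    (Measure.conv_absolutelyContinuous hζ)
  have hZ := pos measurePreserving_snd hζ
  have hD₁ := pos (measurePreserving_comp_fst_add_snd measurePreserving_fst)
    (Measure.conv_absolutelyContinuous (μ := α) hζ)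
  have hD₂ := pos (measurePreserving_comp_fst_add_snd measurePreserving_snd)
    (Measure.conv_absolutelyContinuous (μ := β) hζ)
  refine (extIntegralNonneg_log_sub_log (by fun_prop) (by fun_prop) ?_ ?_
    (lintegral_rnDeriv_conv_ratio_le_one α β ζ hζ)).congr ?_
  · filter_upwards [hT, hZ] with q h₁ h₂
    exact ⟨mul_ne_zero h₁.1 h₂.1, ENNReal.mul_ne_top h₁.2 h₂.2⟩
  · filter_upwards [hD₁, hD₂] with q h₁ h₂
    exact ⟨mul_ne_zero h₁.1 h₂.1, ENNReal.mul_ne_top h₁.2 h₂.2⟩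
  · filter_upwards [hT, hZ, hD₁, hD₂] with q h₁ h₂ h₃ h₄
    have ne : ∀ {x : ℝ≥0∞}, x ≠ 0 ∧ x ≠ ∞ → x.toReal ≠ 0 :=
      fun h => (ENNReal.toReal_pos h.1 h.2).ne'
    simp only [logDensity, ENNReal.toReal_mul, Real.log_mul (ne h₁) (ne h₂),
      Real.log_mul (ne h₃) (ne h₄)]
    ring

theorem entropy_conv_add_entropy_le (α β ζ : Measure G) [IsProbabilityMeasure α]
    [IsProbabilityMeasure β] [IsProbabilityMeasure ζ] (hσ : α ∗ β ≪ μ) (hζ : ζ ≪ μ)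
    (hσi : Integrable (logDensity μ (α ∗ β)) (α ∗ β)) (hζi : Integrable (logDensity μ ζ) ζ)
    (hαi : Integrable (logDensity μ (α ∗ ζ)) (α ∗ ζ))
    (hβi : Integrable (logDensity μ (β ∗ ζ)) (β ∗ ζ)) :
    entropy μ (α ∗ β) + entropy μ ζ ≤ entropy μ (α ∗ ζ) + entropy μ (β ∗ ζ) := by
  have hSZ := (measurePreserving_add_conv α β).prod (MeasurePreserving.id ζ)
  have hS : MeasurePreserving (fun q : (G × G) × G => q.1.1 + q.1.2) ((α.prod β).prod ζ) (α ∗ β) :=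
    (measurePreserving_add_conv α β).comp measurePreserving_fst
  have hZ : MeasurePreserving (fun q : (G × G) × G => q.2) ((α.prod β).prod ζ) ζ :=
    measurePreserving_snd
  have hD₁ := measurePreserving_comp_fst_add_snd (ζ := ζ) (measurePreserving_fst (μ := α) (ν := β))
  have hD₂ := measurePreserving_comp_fst_add_snd (ζ := ζ) (measurePreserving_snd (μ := α) (ν := β))
  have hm := measurable_logDensity μ
  have hL := ((extIntegralNonneg_logDensity_sub_logDensity_conv (α ∗ β) ζ hσ
    (Measure.conv_absolutelyContinuous hζ)).comp hSZ
      ((hm _).comp measurable_fst |>.sub ((hm _).comp measurable_add))).add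
    (extIntegralNonneg_logDensity_submodular α β ζ hζ) (by fun_prop) (by fun_prop)
  have i₁ : Integrable (fun q : (G × G) × G => logDensity μ (α ∗ β) (q.1.1 + q.1.2))
      ((α.prod β).prod ζ) := hS.integrable_comp_of_integrable hσi
  have i₂ : Integrable (fun q : (G × G) × G => logDensity μ ζ q.2) ((α.prod β).prod ζ) :=
    hZ.integrable_comp_of_integrable hζi
  have i₃ : Integrable (fun q : (G × G) × G => logDensity μ (α ∗ ζ) (q.1.1 + q.2))
      ((α.prod β).prod ζ) := hD₁.integrable_comp_of_integrable hαi
  have i₄ : Integrable (fun q : (G × G) × G => logDensity μ (β ∗ ζ) (q.1.2 + q.2))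
      ((α.prod β).prod ζ) := hD₂.integrable_comp_of_integrable hβi
  have key := (hL.congr (Filter.Eventually.of_forall fun q => by
    simp only [Function.comp_apply, Pi.add_apply, Pi.sub_apply, Prod.map_fst, Prod.map_snd, id]
    ring)).integral_nonneg (((i₁.add i₂).sub i₃).sub i₄)
  rw [integral_sub' ((i₁.add i₂).sub i₃) i₄, integral_sub' (i₁.add i₂) i₃, integral_add' i₁ i₂,
    hS.integral_comp_of_aestronglyMeasurable (hm _).aestronglyMeasurable,
    hZ.integral_comp_of_aestronglyMeasurable (hm _).aestronglyMeasurable,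
    hD₁.integral_comp_of_aestronglyMeasurable (hm _).aestronglyMeasurable,
    hD₂.integral_comp_of_aestronglyMeasurable (hm _).aestronglyMeasurable] at key
  simp only [entropy]
  linarith

end Entropy

/-- **Doubling-difference inequality (upper bound).**
If `X₁, X₂` are i.i.d. continuous random variables with all relevant differential
entropies existing and finite, then `h(X₁+X₂) - h(X₁) ≤ 2·(h(X₁-X₂) - h(X₁))`. -/
theorem doubling_difference_upper
    {Ω : Type*} [MeasurableSpace Ω] (P : Measure Ω) [IsProbabilityMeasure P]
    (X₁ X₂ : Ω → ℝ) (hX₁ : Measurable X₁) (hX₂ : Measurable X₂)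
    (hindep : IndepFun X₁ X₂ P) (hid : IdentDistrib X₁ X₂ P P)
    (h1 : FiniteDent volume P (X₁ + X₂)) (h2 : FiniteDent volume P (X₁ - X₂))
    (h3 : FiniteDent volume P X₁) :
    dent volume P (X₁ + X₂) - dent volume P X₁ ≤
      2 * (dent volume P (X₁ - X₂) - dent volume P X₁) := by
  set ρ := P.map X₁
  have : IsProbabilityMeasure ρ := Measure.isProbabilityMeasure_map hX₁.aemeasurable
  have : IsProbabilityMeasure (ρ.map Neg.neg) :=
    Measure.isProbabilityMeasure_map measurable_neg.aemeasurable
  have hneg := Measure.measurePreserving_neg (volume : Measure ℝ)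
  have hsum : P.map (X₁ + X₂) = ρ ∗ ρ := by
    rw [hindep.map_add_eq_map_conv_map hX₁ hX₂, ← hid.map_eq]
  have hdiff : P.map (X₁ - X₂) = ρ ∗ ρ.map Neg.neg := by
    rw [hindep.map_sub_eq_map_conv_map_neg hX₁ hX₂, ← hid.map_eq]
  have key := entropy_conv_add_entropy_le ρ ρ (ρ.map Neg.neg) (hsum ▸ h1.1)
    (hneg.map_eq ▸ h3.1.map measurable_neg) (hsum ▸ h1.2)
    ((integrable_logDensity_map_iff (MeasurableEquiv.neg ℝ) hneg h3.1).2 h3.2) (hdiff ▸ h2.2)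
    (hdiff ▸ h2.2)
  have hsymm : entropy volume (ρ.map Neg.neg) = entropy volume ρ :=
    entropy_map_eq (MeasurableEquiv.neg ℝ) hneg h3.1
  rw [hsymm, ← hsum, ← hdiff] at key
  change entropy volume (P.map (X₁ + X₂)) - entropy volume ρ ≤
    2 * (entropy volume (P.map (X₁ - X₂)) - entropy volume ρ)
  linarith
end

section
/- Suppose X, Y are independent real-valued continuous random variables, let Z = X - Y, and let (X1,Y1) and (X2,Y2) be two conditionally independent versions of (X,Y) given Z (i.e., each pair has the same joint distribution as (X,Y), each satisfies Xi - Yi = Z, and the two pairs are conditionally independent given Z). If all relevant differential entropies exist and are finite, then h(Z,Y1,Y2) + h(Z) - h(Y1) - h(Y2) = h(X1) + h(X2), where h(Z,Y1,Y2) is the joint differential entropy of the triple. -/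
open MeasureTheory ProbabilityTheory

/-!
The shear `(x, y) ↦ (x - y, y)` preserves Lebesgue measure and maps `(Xᵢ, Yᵢ)` to `(Z, Yᵢ)`, so
independence gives `h(Z, Yᵢ) = h(Xᵢ) + h(Yᵢ)`. Conditional independence of `Y₁, Y₂` given `Z`
makes the joint density factor as `f(z, y₁, y₂) = f₁(z, y₁) f₂(z, y₂) / f_Z(z)`, hence
`h(Z, Y₁, Y₂) = h(Z, Y₁) + h(Z, Y₂) - h(Z)`; the two identities combine to the claim.
-/

open Real
open scoped ENNReal

section

variable {Ω α β γ : Type*} [MeasurableSpace Ω] [MeasurableSpace α] [MeasurableSpace β]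
  [MeasurableSpace γ]

section LogDensity

variable {μ : Measure α} {P : Measure Ω} {W : Ω → α}

lemma dent_eq_neg_integral_llr_comp (hW : Measurable W) :
    dent μ P W = -∫ ω, llr (P.map W) μ (W ω) ∂P :=
  congrArg Neg.neg (integral_map hW.aemeasurable (measurable_llr _ _).aestronglyMeasurable)

lemma FiniteDent.integrable_llr_comp (h : FiniteDent μ P W) (hW : Measurable W) :
    Integrable (fun ω => llr (P.map W) μ (W ω)) P :=
  h.2.comp_measurable hW

variable [IsFiniteMeasure P] [SigmaFinite μ]

lemma ae_toReal_rnDeriv_comp_pos (hW : Measurable W) (hac : P.map W ≪ μ) :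
    ∀ᵐ ω ∂P, 0 < ((P.map W).rnDeriv μ (W ω)).toReal := by
  have hpos : ∀ᵐ x ∂P.map W, 0 < ((P.map W).rnDeriv μ x).toReal := by
    filter_upwards [Measure.rnDeriv_pos hac,
      hac.ae_le (Measure.rnDeriv_lt_top (P.map W) μ)] with x h0 htop
    exact ENNReal.toReal_pos h0.ne' htop.ne
  exact ae_of_ae_map hW.aemeasurable hpos

end LogDensity

section MeasurePreserving

variable {μ : Measure α} {μ' : Measure β} [SigmaFinite μ] (e : α ≃ᵐ β)

lemma llr_map_measurableEquiv_ae_eq (ν : Measure α) [SigmaFinite ν]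
    (he : MeasurePreserving e μ μ') :
    (fun x => llr (ν.map e) μ' (e x)) =ᵐ[μ] llr ν μ := by
  filter_upwards [he.map_eq ▸ e.measurableEmbedding.rnDeriv_map ν μ] with x hx
  rw [llr, hx, llr]

variable {P : Measure Ω} [IsFiniteMeasure P] {W : Ω → α}

lemma llr_map_measurableEquiv_comp_ae_eq (he : MeasurePreserving e μ μ') (hW : Measurable W)
    (hac : P.map W ≪ μ) :
    (fun ω => llr (P.map (e ∘ W)) μ' (e (W ω))) =ᵐ[P] fun ω => llr (P.map W) μ (W ω) := by
  rw [← Measure.map_map e.measurable hW]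
  exact ae_of_ae_map hW.aemeasurable (hac.ae_le (llr_map_measurableEquiv_ae_eq e _ he))

lemma dent_measurableEquiv_comp (he : MeasurePreserving e μ μ') (hW : Measurable W)
    (hac : P.map W ≪ μ) : dent μ' P (e ∘ W) = dent μ P W := by
  rw [dent_eq_neg_integral_llr_comp (e.measurable.comp hW), dent_eq_neg_integral_llr_comp hW]
  exact congrArg Neg.neg (integral_congr_ae (llr_map_measurableEquiv_comp_ae_eq e he hW hac))

lemma FiniteDent.measurableEquiv_comp (h : FiniteDent μ P W) (he : MeasurePreserving e μ μ')
    (hW : Measurable W) : FiniteDent μ' P (e ∘ W) := by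
  refine ⟨?_, ?_⟩
  · rw [← Measure.map_map e.measurable hW, ← he.map_eq]
    exact h.1.map e.measurable
  · refine (integrable_map_measure (measurable_llr _ _).aestronglyMeasurable
      (e.measurable.comp hW).aemeasurable).2 ?_
    exact (h.integrable_llr_comp hW).congr
      (llr_map_measurableEquiv_comp_ae_eq e he hW h.1).symm

end MeasurePreserving

def MeasurableEquiv.subProd (G : Type*) [AddGroup G] [MeasurableSpace G] [MeasurableAdd₂ G]
    [MeasurableNeg G] : G × G ≃ᵐ G × G :=
  MeasurableEquiv.prodComm.trans
    ((MeasurableEquiv.shearSubRight G).trans MeasurableEquiv.prodComm)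

lemma MeasurableEquiv.subProd_apply {G : Type*} [AddGroup G] [MeasurableSpace G]
    [MeasurableAdd₂ G] [MeasurableNeg G] (p : G × G) : subProd G p = (p.1 - p.2, p.2) :=
  rfl

lemma MeasurableEquiv.measurePreserving_subProd {G : Type*} [AddGroup G] [MeasurableSpace G]
    [MeasurableAdd₂ G] [MeasurableNeg G] (μ ν : Measure G) [SFinite μ] [SFinite ν]
    [μ.IsAddRightInvariant] : MeasurePreserving (subProd G) (μ.prod ν) (μ.prod ν) :=
  measurePreserving_sub_prod μ ν

section Independent

lemma rnDeriv_prod_ae_eq {μ₁ ν₁ : Measure α} {μ₂ ν₂ : Measure β} [SigmaFinite μ₁]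
    [SigmaFinite μ₂] [SigmaFinite ν₁] [SigmaFinite ν₂] (h₁ : ν₁ ≪ μ₁) (h₂ : ν₂ ≪ μ₂) :
    (ν₁.prod ν₂).rnDeriv (μ₁.prod μ₂) =ᵐ[μ₁.prod μ₂]
      fun p => ν₁.rnDeriv μ₁ p.1 * ν₂.rnDeriv μ₂ p.2 := by
  have hf₁ := Measure.measurable_rnDeriv ν₁ μ₁
  have hf₂ := Measure.measurable_rnDeriv ν₂ μ₂
  conv_lhs => rw [← Measure.withDensity_rnDeriv_eq ν₁ μ₁ h₁,
    ← Measure.withDensity_rnDeriv_eq ν₂ μ₂ h₂, prod_withDensity hf₁ hf₂]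
  exact Measure.rnDeriv_withDensity _ ((hf₁.comp measurable_fst).mul (hf₂.comp measurable_snd))

lemma ProbabilityTheory.IdentDistrib.indepFun_of_prodMk {Ω' : Type*} [MeasurableSpace Ω']
    {P : Measure Ω} {P' : Measure Ω'} [IsFiniteMeasure P] [IsFiniteMeasure P']
    {X : Ω → α} {Y : Ω → β} {X' : Ω' → α} {Y' : Ω' → β}
    (h : IdentDistrib (fun ω => (X ω, Y ω)) (fun ω => (X' ω, Y' ω)) P P')
    (hXY' : IndepFun X' Y' P') : IndepFun X Y P := by
  have hX : P.map X = P'.map X' := (h.comp measurable_fst).map_eq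
  have hY : P.map Y = P'.map Y' := (h.comp measurable_snd).map_eq
  rw [indepFun_iff_map_prod_eq_prod_map_map h.aemeasurable_fst.fst h.aemeasurable_fst.snd,
    h.map_eq, hXY'.map_prod_eq_prod_map_map h.aemeasurable_snd.fst h.aemeasurable_snd.snd, hX, hY]

variable {P : Measure Ω} [IsProbabilityMeasure P] {μ : Measure α} {ν : Measure β}
  [SigmaFinite μ] [SigmaFinite ν] {X : Ω → α} {Y : Ω → β}

lemma llr_prodMk_comp_ae_eq_of_indepFun (hX : Measurable X) (hY : Measurable Y)
    (hXY : IndepFun X Y P) (hXμ : P.map X ≪ μ) (hYν : P.map Y ≪ ν) :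
    (fun ω => llr (P.map fun ω => (X ω, Y ω)) (μ.prod ν) (X ω, Y ω)) =ᵐ[P]
      fun ω => llr (P.map X) μ (X ω) + llr (P.map Y) ν (Y ω) := by
  have hmap := hXY.map_prod_eq_prod_map_map hX.aemeasurable hY.aemeasurable
  have hdens := ae_of_ae_map (hX.prodMk hY).aemeasurable
    (hmap ▸ (hXμ.prod hYν).ae_le (rnDeriv_prod_ae_eq hXμ hYν))
  filter_upwards [hdens, ae_toReal_rnDeriv_comp_pos hX hXμ,
    ae_toReal_rnDeriv_comp_pos hY hYν] with ω hω hXω hYω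
  rw [llr, hω, ENNReal.toReal_mul, log_mul hXω.ne' hYω.ne', llr, llr]

lemma FiniteDent.prodMk_of_indepFun (hX : Measurable X) (hY : Measurable Y)
    (hXY : IndepFun X Y P) (hXd : FiniteDent μ P X) (hYd : FiniteDent ν P Y) :
    FiniteDent (μ.prod ν) P fun ω => (X ω, Y ω) := by
  refine ⟨hXY.map_prod_eq_prod_map_map hX.aemeasurable hY.aemeasurable ▸ hXd.1.prod hYd.1,
    (integrable_map_measure (measurable_llr _ _).aestronglyMeasurable
      (hX.prodMk hY).aemeasurable).2 ?_⟩
  exact ((hXd.integrable_llr_comp hX).add (hYd.integrable_llr_comp hY)).congr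
    (llr_prodMk_comp_ae_eq_of_indepFun hX hY hXY hXd.1 hYd.1).symm

lemma dent_prodMk_of_indepFun (hX : Measurable X) (hY : Measurable Y) (hXY : IndepFun X Y P)
    (hXd : FiniteDent μ P X) (hYd : FiniteDent ν P Y) :
    dent (μ.prod ν) P (fun ω => (X ω, Y ω)) = dent μ P X + dent ν P Y := by
  rw [dent_eq_neg_integral_llr_comp (hX.prodMk hY),
    integral_congr_ae (llr_prodMk_comp_ae_eq_of_indepFun hX hY hXY hXd.1 hYd.1),
    integral_add (hXd.integrable_llr_comp hX) (hYd.integrable_llr_comp hY),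
    dent_eq_neg_integral_llr_comp hX, dent_eq_neg_integral_llr_comp hY, neg_add]

end Independent

lemma ENNReal.mul_mul_eq_mul_mul_mul_inv {a b c : ℝ≥0∞} (hc : c ≠ ∞) :
    c * (a * b) = c * a * (c * b) * c⁻¹ := by
  rcases eq_or_ne c 0 with rfl | hc₀
  · simp
  · calc c * (a * b) = c * (a * b) * (c * c⁻¹) := by rw [ENNReal.mul_inv_cancel hc₀ hc, mul_one]
      _ = c * a * (c * b) * c⁻¹ := by ring

section CondIndep

lemma rnDeriv_mul_kernel_apply_ae_eq {μ : Measure α} {ν : Measure β} [SigmaFinite μ]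
    [SigmaFinite ν] {ζ : Measure α} [IsFiniteMeasure ζ] (κ : Kernel α β) [IsFiniteKernel κ]
    (hζ : ζ ≪ μ) (hζκ : ζ ⊗ₘ κ ≪ μ.prod ν) {B : Set β} (hB : MeasurableSet B) :
    (fun z => ζ.rnDeriv μ z * κ z B) =ᵐ[μ]
      fun z => ∫⁻ y in B, (ζ ⊗ₘ κ).rnDeriv (μ.prod ν) (z, y) ∂ν := by
  have hdens := Measure.measurable_rnDeriv (ζ ⊗ₘ κ) (μ.prod ν)
  refine ae_eq_of_forall_setLIntegral_eq_of_sigmaFinite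
    ((Measure.measurable_rnDeriv ζ μ).mul (κ.measurable_coe hB)) hdens.lintegral_prod_right'
    fun A hA _ => ?_
  calc ∫⁻ z in A, ζ.rnDeriv μ z * κ z B ∂μ = ∫⁻ z in A, κ z B ∂ζ :=
        setLIntegral_rnDeriv_mul hζ (κ.measurable_coe hB).aemeasurable hA
    _ = (ζ ⊗ₘ κ) (A ×ˢ B) := (Measure.compProd_apply_prod hA hB).symm
    _ = ∫⁻ p in A ×ˢ B, (ζ ⊗ₘ κ).rnDeriv (μ.prod ν) p ∂(μ.prod ν) :=
        (Measure.setLIntegral_rnDeriv hζκ _).symm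
    _ = ∫⁻ z in A, ∫⁻ y in B, (ζ ⊗ₘ κ).rnDeriv (μ.prod ν) (z, y) ∂ν ∂μ :=
        setLIntegral_prod _ hdens.aemeasurable

variable {P : Measure Ω} [IsProbabilityMeasure P] [StandardBorelSpace Ω]
  [StandardBorelSpace β] [Nonempty β] [StandardBorelSpace γ] [Nonempty γ]
  {Z : Ω → α} {Y₁ : Ω → β} {Y₂ : Ω → γ}

lemma map_prodMk_prodMk_apply_of_condIndepFun (hZ : Measurable Z) (hY₁ : Measurable Y₁)
    (hY₂ : Measurable Y₂) (hci : Y₁ ⟂ᵢ[Z, hZ; P] Y₂) {A : Set α} {B : Set β} {C : Set γ}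
    (hA : MeasurableSet A) (hB : MeasurableSet B) (hC : MeasurableSet C) :
    P.map (fun ω => (Z ω, Y₁ ω, Y₂ ω)) (A ×ˢ B ×ˢ C) =
      ∫⁻ z in A, condDistrib Y₁ Z P z B * condDistrib Y₂ Z P z C ∂(P.map Z) := by
  rw [(condIndepFun_iff_map_prod_eq_prod_condDistrib_prod_condDistrib hY₁ hY₂ hZ).1 hci,
    ← Measure.compProd_eq_comp_prod, Measure.compProd_apply_prod hA (hB.prod hC)]
  simp only [Kernel.prod_apply_prod]

variable {μ : Measure α} {ν₁ : Measure β} {ν₂ : Measure γ} [SigmaFinite μ] [SigmaFinite ν₁]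
  [SigmaFinite ν₂]

theorem map_prodMk_prodMk_eq_withDensity_of_condIndepFun (hZ : Measurable Z)
    (hY₁ : Measurable Y₁) (hY₂ : Measurable Y₂) (hci : Y₁ ⟂ᵢ[Z, hZ; P] Y₂)
    (hZμ : P.map Z ≪ μ) (h₁ : P.map (fun ω => (Z ω, Y₁ ω)) ≪ μ.prod ν₁)
    (h₂ : P.map (fun ω => (Z ω, Y₂ ω)) ≪ μ.prod ν₂) :
    P.map (fun ω => (Z ω, Y₁ ω, Y₂ ω)) = (μ.prod (ν₁.prod ν₂)).withDensity fun x =>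
      (P.map fun ω => (Z ω, Y₁ ω)).rnDeriv (μ.prod ν₁) (x.1, x.2.1) *
        (P.map fun ω => (Z ω, Y₂ ω)).rnDeriv (μ.prod ν₂) (x.1, x.2.2) *
        ((P.map Z).rnDeriv μ x.1)⁻¹ := by
  set f := (P.map Z).rnDeriv μ
  set f₁ := (P.map fun ω => (Z ω, Y₁ ω)).rnDeriv (μ.prod ν₁)
  set f₂ := (P.map fun ω => (Z ω, Y₂ ω)).rnDeriv (μ.prod ν₂)
  have hf₁ {B : Set β} (hB : MeasurableSet B) :
      (fun z => f z * condDistrib Y₁ Z P z B) =ᵐ[μ] fun z => ∫⁻ y in B, f₁ (z, y) ∂ν₁ := by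
    have h : P.map Z ⊗ₘ condDistrib Y₁ Z P = P.map fun ω => (Z ω, Y₁ ω) :=
      compProd_map_condDistrib hY₁.aemeasurable
    have hκ := rnDeriv_mul_kernel_apply_ae_eq (ν := ν₁) _ hZμ (h ▸ h₁) hB
    rwa [h] at hκ
  have hf₂ {C : Set γ} (hC : MeasurableSet C) :
      (fun z => f z * condDistrib Y₂ Z P z C) =ᵐ[μ] fun z => ∫⁻ y in C, f₂ (z, y) ∂ν₂ := by
    have h : P.map Z ⊗ₘ condDistrib Y₂ Z P = P.map fun ω => (Z ω, Y₂ ω) :=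
      compProd_map_condDistrib hY₂.aemeasurable
    have hκ := rnDeriv_mul_kernel_apply_ae_eq (ν := ν₂) _ hZμ (h ▸ h₂) hC
    rwa [h] at hκ
  -- On a box `A × B × C` both sides reduce to `∫_A f κ₁(·, B) κ₂(·, C) dμ`,
  -- where `κᵢ = condDistrib Yᵢ Z P`.
  refine Measure.ext_prod₃ fun {A B C} hA hB hC => ?_
  rw [map_prodMk_prodMk_apply_of_condIndepFun hZ hY₁ hY₂ hci hA hB hC,
    withDensity_apply _ (hA.prod (hB.prod hC)), setLIntegral_prod _ (by fun_prop)]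
  refine (setLIntegral_rnDeriv_mul hZμ
    (f := fun z => condDistrib Y₁ Z P z B * condDistrib Y₂ Z P z C)
    (((condDistrib Y₁ Z P).measurable_coe hB).mul
      ((condDistrib Y₂ Z P).measurable_coe hC)).aemeasurable hA).symm.trans ?_
  refine lintegral_congr_ae (ae_restrict_of_ae ?_)
  filter_upwards [hf₁ hB, hf₂ hC, Measure.rnDeriv_lt_top (P.map Z) μ] with z h₁z h₂z hz
  rw [lintegral_mul_const _ (by fun_prop), ← Measure.prod_restrict,
    lintegral_prod_mul (f := fun y => f₁ (z, y)) (g := fun y => f₂ (z, y)) (by fun_prop)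
      (by fun_prop), ← h₁z, ← h₂z]
  exact ENNReal.mul_mul_eq_mul_mul_mul_inv hz.ne

theorem dent_prodMk_prodMk_of_condIndepFun (hZ : Measurable Z) (hY₁ : Measurable Y₁)
    (hY₂ : Measurable Y₂) (hci : Y₁ ⟂ᵢ[Z, hZ; P] Y₂) (hZd : FiniteDent μ P Z)
    (h₁ : FiniteDent (μ.prod ν₁) P fun ω => (Z ω, Y₁ ω))
    (h₂ : FiniteDent (μ.prod ν₂) P fun ω => (Z ω, Y₂ ω)) :
    dent (μ.prod (ν₁.prod ν₂)) P (fun ω => (Z ω, Y₁ ω, Y₂ ω)) =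
      dent (μ.prod ν₁) P (fun ω => (Z ω, Y₁ ω)) + dent (μ.prod ν₂) P (fun ω => (Z ω, Y₂ ω))
        - dent μ P Z := by
  have hZY₁ : Measurable fun ω => (Z ω, Y₁ ω) := hZ.prodMk hY₁
  have hZY₂ : Measurable fun ω => (Z ω, Y₂ ω) := hZ.prodMk hY₂
  have hW : Measurable fun ω => (Z ω, Y₁ ω, Y₂ ω) := hZ.prodMk (hY₁.prodMk hY₂)
  have hdens : ∀ᵐ ω ∂P,
      (P.map fun ω => (Z ω, Y₁ ω, Y₂ ω)).rnDeriv (μ.prod (ν₁.prod ν₂)) (Z ω, Y₁ ω, Y₂ ω) =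
        (P.map fun ω => (Z ω, Y₁ ω)).rnDeriv (μ.prod ν₁) (Z ω, Y₁ ω) *
          (P.map fun ω => (Z ω, Y₂ ω)).rnDeriv (μ.prod ν₂) (Z ω, Y₂ ω) *
          ((P.map Z).rnDeriv μ (Z ω))⁻¹ := by
    refine ae_of_ae_map (p := fun x => (P.map fun ω => (Z ω, Y₁ ω, Y₂ ω)).rnDeriv
      (μ.prod (ν₁.prod ν₂)) x = (P.map fun ω => (Z ω, Y₁ ω)).rnDeriv (μ.prod ν₁) (x.1, x.2.1) *
        (P.map fun ω => (Z ω, Y₂ ω)).rnDeriv (μ.prod ν₂) (x.1, x.2.2) *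
        ((P.map Z).rnDeriv μ x.1)⁻¹) hW.aemeasurable ?_
    rw [map_prodMk_prodMk_eq_withDensity_of_condIndepFun hZ hY₁ hY₂ hci hZd.1 h₁.1 h₂.1]
    exact (withDensity_absolutelyContinuous _ _).ae_le
      (Measure.rnDeriv_withDensity _ (by fun_prop))
  have hsplit : (fun ω => llr (P.map fun ω => (Z ω, Y₁ ω, Y₂ ω)) (μ.prod (ν₁.prod ν₂))
      (Z ω, Y₁ ω, Y₂ ω)) =ᵐ[P] fun ω => llr (P.map fun ω => (Z ω, Y₁ ω)) (μ.prod ν₁) (Z ω, Y₁ ω)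
        + llr (P.map fun ω => (Z ω, Y₂ ω)) (μ.prod ν₂) (Z ω, Y₂ ω) - llr (P.map Z) μ (Z ω) := by
    filter_upwards [hdens, ae_toReal_rnDeriv_comp_pos hZY₁ h₁.1,
      ae_toReal_rnDeriv_comp_pos hZY₂ h₂.1, ae_toReal_rnDeriv_comp_pos hZ hZd.1]
      with ω hω h₁ω h₂ω hZω
    rw [llr, hω, ENNReal.toReal_mul, ENNReal.toReal_mul, ENNReal.toReal_inv,
      log_mul (mul_pos h₁ω h₂ω).ne' (inv_pos.2 hZω).ne', log_mul h₁ω.ne' h₂ω.ne', log_inv,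
      llr, llr, llr, sub_eq_add_neg]
  have hI₁ := h₁.integrable_llr_comp hZY₁
  have hI₂ := h₂.integrable_llr_comp hZY₂
  rw [dent_eq_neg_integral_llr_comp hW, integral_congr_ae hsplit,
    integral_sub (hI₁.add hI₂ : Integrable (fun ω => _ + _) P) (hZd.integrable_llr_comp hZ),
    integral_add hI₁ hI₂, dent_eq_neg_integral_llr_comp hZY₁,
    dent_eq_neg_integral_llr_comp hZY₂, dent_eq_neg_integral_llr_comp hZ]
  ring

end CondIndep

end

theorem cond_indep_entropy_identity_general
    {Ω₀ : Type*} [MeasurableSpace Ω₀] (P₀ : Measure Ω₀) [IsProbabilityMeasure P₀]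
    {Ω : Type*} [MeasurableSpace Ω] [StandardBorelSpace Ω]
    (P : Measure Ω) [IsProbabilityMeasure P]
    (X Y : Ω₀ → ℝ) (hindep : IndepFun X Y P₀)
    (X₁ Y₁ X₂ Y₂ Z : Ω → ℝ)
    (hX₁ : Measurable X₁) (hY₁ : Measurable Y₁) (hX₂ : Measurable X₂)
    (hY₂ : Measurable Y₂) (hZ : Measurable Z)
    (hZ₁ : ∀ ω, X₁ ω - Y₁ ω = Z ω) (hZ₂ : ∀ ω, X₂ ω - Y₂ ω = Z ω)
    (hid₁ : IdentDistrib (fun ω => (X₁ ω, Y₁ ω)) (fun ω => (X ω, Y ω)) P P₀)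
    (hid₂ : IdentDistrib (fun ω => (X₂ ω, Y₂ ω)) (fun ω => (X ω, Y ω)) P P₀)
    (hci : CondIndepFun (MeasurableSpace.comap Z inferInstance) hZ.comap_le
      (fun ω => (X₁ ω, Y₁ ω)) (fun ω => (X₂ ω, Y₂ ω)) P)
    (h2 : FiniteDent volume P Z) (h3 : FiniteDent volume P Y₁)
    (h4 : FiniteDent volume P Y₂) (h5 : FiniteDent volume P X₁)
    (h6 : FiniteDent volume P X₂) :
    dent volume P (fun ω => (Z ω, Y₁ ω, Y₂ ω)) + dent volume P Z
        - dent volume P Y₁ - dent volume P Y₂ =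
      dent volume P X₁ + dent volume P X₂ := by
  have hind₁ : IndepFun X₁ Y₁ P := hid₁.indepFun_of_prodMk hindep
  have hind₂ : IndepFun X₂ Y₂ P := hid₂.indepFun_of_prodMk hindep
  have hshear₁ : (fun ω => (Z ω, Y₁ ω)) = MeasurableEquiv.subProd ℝ ∘ fun ω => (X₁ ω, Y₁ ω) := by
    funext ω
    simp [MeasurableEquiv.subProd_apply, hZ₁ ω]
  have hshear₂ : (fun ω => (Z ω, Y₂ ω)) = MeasurableEquiv.subProd ℝ ∘ fun ω => (X₂ ω, Y₂ ω) := by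
    funext ω
    simp [MeasurableEquiv.subProd_apply, hZ₂ ω]
  have hsub := MeasurableEquiv.measurePreserving_subProd (volume : Measure ℝ) volume
  have hXY₁ := FiniteDent.prodMk_of_indepFun hX₁ hY₁ hind₁ h5 h3
  have hXY₂ := FiniteDent.prodMk_of_indepFun hX₂ hY₂ hind₂ h6 h4
  have hZY₁ : dent (volume.prod volume) P (fun ω => (Z ω, Y₁ ω)) =
      dent volume P X₁ + dent volume P Y₁ := by
    rw [hshear₁, dent_measurableEquiv_comp _ hsub (hX₁.prodMk hY₁) hXY₁.1,
      dent_prodMk_of_indepFun hX₁ hY₁ hind₁ h5 h3]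
  have hZY₂ : dent (volume.prod volume) P (fun ω => (Z ω, Y₂ ω)) =
      dent volume P X₂ + dent volume P Y₂ := by
    rw [hshear₂, dent_measurableEquiv_comp _ hsub (hX₂.prodMk hY₂) hXY₂.1,
      dent_prodMk_of_indepFun hX₂ hY₂ hind₂ h6 h4]
  have htriple := dent_prodMk_prodMk_of_condIndepFun hZ hY₁ hY₂
    (hci.comp measurable_snd measurable_snd) h2
    (hshear₁ ▸ hXY₁.measurableEquiv_comp _ hsub (hX₁.prodMk hY₁))
    (hshear₂ ▸ hXY₂.measurableEquiv_comp _ hsub (hX₂.prodMk hY₂))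
  rw [Measure.volume_eq_prod, Measure.volume_eq_prod, htriple, hZY₁, hZY₂]
  ring

/-- Suppose `X, Y` are independent continuous random variables, `Z = X - Y`, and
`(X₁,Y₁)`, `(X₂,Y₂)` are two conditionally independent versions of `(X,Y)` given `Z`.
If all relevant differential entropies exist and are finite, then
`h(Z,Y₁,Y₂) + h(Z) - h(Y₁) - h(Y₂) = h(X₁) + h(X₂)`. -/
theorem cond_indep_entropy_identity
    {Ω₀ : Type*} [MeasurableSpace Ω₀] (P₀ : Measure Ω₀) [IsProbabilityMeasure P₀]
    {Ω : Type*} [MeasurableSpace Ω] [StandardBorelSpace Ω]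
    (P : Measure Ω) [IsProbabilityMeasure P]
    (X Y : Ω₀ → ℝ) (hX : Measurable X) (hY : Measurable Y) (hindep : IndepFun X Y P₀)
    (X₁ Y₁ X₂ Y₂ Z : Ω → ℝ)
    (hX₁ : Measurable X₁) (hY₁ : Measurable Y₁) (hX₂ : Measurable X₂)
    (hY₂ : Measurable Y₂) (hZ : Measurable Z)
    (hZ₁ : ∀ ω, X₁ ω - Y₁ ω = Z ω) (hZ₂ : ∀ ω, X₂ ω - Y₂ ω = Z ω)
    (hid₁ : IdentDistrib (fun ω => (X₁ ω, Y₁ ω)) (fun ω => (X ω, Y ω)) P P₀)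
    (hid₂ : IdentDistrib (fun ω => (X₂ ω, Y₂ ω)) (fun ω => (X ω, Y ω)) P P₀)
    (hci : CondIndepFun (MeasurableSpace.comap Z inferInstance) hZ.comap_le
      (fun ω => (X₁ ω, Y₁ ω)) (fun ω => (X₂ ω, Y₂ ω)) P)
    (h1 : FiniteDent volume P (fun ω => (Z ω, Y₁ ω, Y₂ ω)))
    (h2 : FiniteDent volume P Z) (h3 : FiniteDent volume P Y₁)
    (h4 : FiniteDent volume P Y₂) (h5 : FiniteDent volume P X₁)
    (h6 : FiniteDent volume P X₂) :
    dent volume P (fun ω => (Z ω, Y₁ ω, Y₂ ω)) + dent volume P Z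
        - dent volume P Y₁ - dent volume P Y₂ =
      dent volume P X₁ + dent volume P X₂ :=
  cond_indep_entropy_identity_general P₀ P X Y hindep X₁ Y₁ X₂ Y₂ Z hX₁ hY₁ hX₂ hY₂ hZ hZ₁ hZ₂ hid₁
    hid₂ hci h2 h3 h4 h5 h6
end

section
/- Ruzsa covering lemma for Shannon entropy: Suppose X, Y are independent discrete random variables taking values in a discrete abelian group with finite Shannon entropies, and let (X1,Y1), (X2,Y2) be versions of (X,Y) that are conditionally independent given X+Y (i.e., each pair has the same joint distribution as (X,Y), each satisfies Xi + Yi = X1 + Y1, and the two pairs are conditionally independent given this common sum). Then H(X1, X2, Y1 | Y2) = 2H(X) + H(Y) - H(X+Y), where H denotes discrete Shannon entropy and H(·|·) conditional Shannon entropy. -/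
open MeasureTheory ProbabilityTheory

/-- The Shannon entropy of a discrete random variable `X`:
`H(X) = ∑ₓ P(X = x) log (1 / P(X = x))`. -/
noncomputable def sent {Ω S : Type*} [MeasurableSpace Ω] [MeasurableSpace S]
    (P : Measure Ω) (X : Ω → S) : ℝ :=
  ∑' s : S, Real.negMulLog ((P.map X) {s}).toReal

/-- The Shannon entropy of `X` is well defined and finite: the series defining it
converges (absolutely). -/
def FiniteSent {Ω S : Type*} [MeasurableSpace Ω] [MeasurableSpace S]
    (P : Measure Ω) (X : Ω → S) : Prop :=
  Summable (fun s : S => Real.negMulLog ((P.map X) {s}).toReal)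

/-- The conditional Shannon entropy `H(U|V) = H(U,V) - H(V)`. -/
noncomputable def condSent {Ω S T : Type*} [MeasurableSpace Ω] [MeasurableSpace S]
    [MeasurableSpace T] (P : Measure Ω) (U : Ω → S) (V : Ω → T) : ℝ :=
  sent P (fun ω => (U ω, V ω)) - sent P V

/-!
Write `H(Z) = 𝔼[-log p_Z(Z)]` with `p_Z` the probability mass function of `Z`, and work with
`ℝ≥0∞`-valued entropies so that no summability has to be tracked. Conditional independence of
`U` and `V` given a common function `W` of both means that on each atom `{W = w}`
`p_{UV}(u, v) p_W(w) = p_U(u) p_V(v)` for `u`, `v` over `w`; taking `-log` and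
expectations gives `H(U, V) + H(W) = H(U) + H(V)`. For `U = (X₁, Y₁)`, `V = (X₂, Y₂)`,
`W = X₁ + Y₁`, independence gives `H(U) = H(V) = H(X) + H(Y)`, hence
`H(X₁, X₂, Y₁, Y₂) = 2 H(X) + 2 H(Y) - H(X + Y)`, and subtracting `H(Y₂) = H(Y)` gives the claim.
Finiteness of `H(X)` and `H(Y)` forces all entropies involved to be finite.
-/

open scoped ENNReal

/- `Real.log 0 = 0` makes `surprisal 0 = 0` rather than `∞`; this is harmless, since the
surprisal is only ever evaluated at probabilities of outcomes, which are almost surely positive. -/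
noncomputable def surprisal (r : ℝ≥0∞) : ℝ≥0∞ := ENNReal.ofReal (-Real.log r.toReal)

lemma surprisal_mul {r s : ℝ≥0∞} (hr₀ : r ≠ 0) (hr₁ : r ≤ 1) (hs₀ : s ≠ 0) (hs₁ : s ≤ 1) :
    surprisal (r * s) = surprisal r + surprisal s := by
  have hr : 0 < r.toReal := ENNReal.toReal_pos hr₀ (ne_top_of_le_ne_top ENNReal.one_ne_top hr₁)
  have hs : 0 < s.toReal := ENNReal.toReal_pos hs₀ (ne_top_of_le_ne_top ENNReal.one_ne_top hs₁)
  have hr' : r.toReal ≤ 1 := ENNReal.toReal_le_of_le_ofReal zero_le_one (by simpa using hr₁)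
  have hs' : s.toReal ≤ 1 := ENNReal.toReal_le_of_le_ofReal zero_le_one (by simpa using hs₁)
  rw [surprisal, surprisal, surprisal, ENNReal.toReal_mul, Real.log_mul hr.ne' hs.ne', neg_add,
    ENNReal.ofReal_add (neg_nonneg.2 (Real.log_nonpos hr.le hr'))
      (neg_nonneg.2 (Real.log_nonpos hs.le hs'))]

lemma ENNReal.toReal_eq_add_sub_of_add_eq {a b c d : ℝ≥0∞} (h : a + b = c + d) (hc : c ≠ ∞)
    (hd : d ≠ ∞) : a.toReal = c.toReal + d.toReal - b.toReal := by
  obtain ⟨ha, hb⟩ := ENNReal.add_ne_top.1 (h.trans_ne (ENNReal.add_ne_top.2 ⟨hc, hd⟩))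
  rw [← ENNReal.toReal_add hc hd, ← h, ENNReal.toReal_add ha hb, add_sub_cancel_right]

lemma surprisal_mul_self {r : ℝ≥0∞} (hr : r ≠ ∞) :
    surprisal r * r = ENNReal.ofReal (Real.negMulLog r.toReal) := by
  rw [surprisal, Real.negMulLog, neg_mul_comm, ENNReal.ofReal_mul ENNReal.toReal_nonneg,
    ENNReal.ofReal_toReal hr, mul_comm]

section Entropy

variable {S T : Type*} [MeasurableSpace S] [Countable S] [MeasurableSingletonClass S]
  [MeasurableSpace T] [Countable T] [MeasurableSingletonClass T]

noncomputable def measureEntropy (ν : Measure S) : ℝ≥0∞ := ∫⁻ s, surprisal (ν {s}) ∂ν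

lemma measureEntropy_eq_tsum (ν : Measure S) [IsFiniteMeasure ν] :
    measureEntropy ν = ∑' s, ENNReal.ofReal (Real.negMulLog (ν {s}).toReal) := by
  rw [measureEntropy, lintegral_countable']
  exact tsum_congr fun s => surprisal_mul_self (measure_ne_top ν {s})

lemma measureEntropy_map_of_injective (ν : Measure S) {e : S → T} (he : e.Injective) :
    measureEntropy (ν.map e) = measureEntropy ν := by
  have hem : Measurable e := measurable_of_countable e
  rw [measureEntropy, lintegral_map (measurable_of_countable _) hem]
  refine lintegral_congr fun s => ?_
  rw [Measure.map_apply hem (measurableSet_singleton _), ← Set.image_singleton,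
    he.preimage_image]

variable {Ω : Type*} [MeasurableSpace Ω] {μ : Measure Ω}

lemma sent_eq_toReal_measureEntropy [IsZeroOrProbabilityMeasure μ] (Z : Ω → S) :
    sent μ Z = (measureEntropy (μ.map Z)).toReal := by
  rw [measureEntropy_eq_tsum, ENNReal.tsum_toReal_eq fun _ => ENNReal.ofReal_ne_top, sent]
  refine tsum_congr fun s => (ENNReal.toReal_ofReal ?_).symm
  exact Real.negMulLog_nonneg ENNReal.toReal_nonneg
    (ENNReal.toReal_le_of_le_ofReal zero_le_one (by simpa using prob_le_one))

lemma FiniteSent.measureEntropy_ne_top {Z : Ω → S} (hZ : FiniteSent μ Z)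
    [IsZeroOrProbabilityMeasure μ] : measureEntropy (μ.map Z) ≠ ∞ := by
  rw [measureEntropy_eq_tsum, ← ENNReal.ofReal_tsum_of_nonneg _ hZ]
  · exact ENNReal.ofReal_ne_top
  · exact fun s => Real.negMulLog_nonneg ENNReal.toReal_nonneg
      (ENNReal.toReal_le_of_le_ofReal zero_le_one (by simpa using prob_le_one))

lemma measureEntropy_map_eq_lintegral {Z : Ω → S} (hZ : Measurable Z) :
    measureEntropy (μ.map Z) = ∫⁻ ω, surprisal (μ.map Z {Z ω}) ∂μ :=
  lintegral_map (measurable_of_countable _) hZ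

omit [MeasurableSingletonClass S] in
lemma ae_map_singleton_ne_zero {Z : Ω → S} (hZ : Measurable Z) : ∀ᵐ ω ∂μ, μ.map Z {Z ω} ≠ 0 :=
  ae_of_ae_map hZ.aemeasurable (ae_iff_of_countable.2 fun _ h => h)

lemma measureEntropy_map_add_eq_lintegral [IsZeroOrProbabilityMeasure μ] {A : Ω → S} {B : Ω → T}
    (hA : Measurable A) (hB : Measurable B) :
    measureEntropy (μ.map A) + measureEntropy (μ.map B) =
      ∫⁻ ω, surprisal (μ.map A {A ω} * μ.map B {B ω}) ∂μ := by
  have hA' : Measurable fun ω => surprisal (μ.map A {A ω}) :=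
    (measurable_of_countable fun s => surprisal (μ.map A {s})).comp hA
  rw [measureEntropy_map_eq_lintegral hA, measureEntropy_map_eq_lintegral hB,
    ← lintegral_add_left hA']
  refine lintegral_congr_ae ?_
  filter_upwards [ae_map_singleton_ne_zero hA, ae_map_singleton_ne_zero hB] with ω hAω hBω
  exact (surprisal_mul hAω prob_le_one hBω prob_le_one).symm

lemma ProbabilityTheory.IndepFun.measureEntropy_map_prod [IsProbabilityMeasure μ]
    {X : Ω → S} {Y : Ω → T} (hX : Measurable X) (hY : Measurable Y) (hXY : IndepFun X Y μ) :
    measureEntropy (μ.map fun ω => (X ω, Y ω)) =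
      measureEntropy (μ.map X) + measureEntropy (μ.map Y) := by
  rw [measureEntropy_map_add_eq_lintegral hX hY, measureEntropy_map_eq_lintegral (hX.prodMk hY),
    hXY.map_prod_eq_prod_map_map hX.aemeasurable hY.aemeasurable]
  simp_rw [← Set.singleton_prod_singleton, Measure.prod_prod]

end Entropy

section CondIndep

variable {Ω α β γ : Type*} [MeasurableSpace α] [MeasurableSpace β] [mγ : MeasurableSpace γ]

lemma Measurable.apply_eq_apply_of_comap [MeasurableSingletonClass α] {W : Ω → γ} {h : Ω → α}
    (hh : Measurable[mγ.comap W] h) {ω ω' : Ω} (hW : W ω = W ω') : h ω = h ω' := by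
  obtain ⟨t, -, ht⟩ := hh (measurableSet_singleton (h ω))
  have hω : W ω ∈ t := show ω ∈ W ⁻¹' t from ht ▸ rfl
  have hω' : ω' ∈ h ⁻¹' {h ω} := ht ▸ show W ω' ∈ t from hW ▸ hω
  exact hω'.symm

variable [MeasurableSingletonClass γ] [MeasurableSpace Ω] {μ : Measure Ω}

lemma setIntegral_fiber_eq_mul {W : Ω → γ} (hW : Measurable W) {g : Ω → ℝ}
    (hg : Measurable[mγ.comap W] g) (ω₀ : Ω) :
    ∫ ω in W ⁻¹' {W ω₀}, g ω ∂μ = μ.real (W ⁻¹' {W ω₀}) * g ω₀ := by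
  rw [setIntegral_congr_fun (hW (measurableSet_singleton _))
    fun ω hω => hg.apply_eq_apply_of_comap hω, setIntegral_const, smul_eq_mul]

lemma measureReal_inter_fiber_eq_mul_condExp [IsFiniteMeasure μ] {W : Ω → γ}
    (hW : Measurable W) {C : Set Ω} (hC : MeasurableSet C) (ω₀ : Ω) :
    μ.real (C ∩ W ⁻¹' {W ω₀}) = μ.real (W ⁻¹' {W ω₀}) * (μ⟦C | mγ.comap W⟧) ω₀ := by
  rw [← setIntegral_fiber_eq_mul hW stronglyMeasurable_condExp.measurable,
    setIntegral_condExp hW.comap_le ((integrable_const 1).indicator hC)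
      ⟨{W ω₀}, measurableSet_singleton _, rfl⟩, setIntegral_indicator hC]
  simp [Set.inter_comm]

variable [StandardBorelSpace Ω] [IsFiniteMeasure μ] {W : Ω → γ} (hW : Measurable W)
  {U : Ω → α} {V : Ω → β}

lemma ProbabilityTheory.CondIndepFun.measureReal_inter_fiber_mul
    (hci : CondIndepFun (mγ.comap W) hW.comap_le U V μ) (hU : Measurable U) (hV : Measurable V)
    {s : Set α} {t : Set β} (hs : MeasurableSet s) (ht : MeasurableSet t) (ω₀ : Ω) :
    μ.real (U ⁻¹' s ∩ V ⁻¹' t ∩ W ⁻¹' {W ω₀}) * μ.real (W ⁻¹' {W ω₀}) =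
      μ.real (U ⁻¹' s ∩ W ⁻¹' {W ω₀}) * μ.real (V ⁻¹' t ∩ W ⁻¹' {W ω₀}) := by
  have hint : ∫ ω in W ⁻¹' {W ω₀}, (μ⟦U ⁻¹' s ∩ V ⁻¹' t | mγ.comap W⟧) ω ∂μ =
      ∫ ω in W ⁻¹' {W ω₀}, (μ⟦U ⁻¹' s | mγ.comap W⟧) ω *
        (μ⟦V ⁻¹' t | mγ.comap W⟧) ω ∂μ :=
    setIntegral_congr_ae (hW (measurableSet_singleton _))
      (((condIndepFun_iff_condExp_inter_preimage_eq_mul hU hV).1 hci s t hs ht).mono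
        fun _ h _ => h)
  rw [setIntegral_fiber_eq_mul hW stronglyMeasurable_condExp.measurable,
    setIntegral_fiber_eq_mul (g := fun ω => (μ⟦U ⁻¹' s | mγ.comap W⟧) ω *
      (μ⟦V ⁻¹' t | mγ.comap W⟧) ω) hW (stronglyMeasurable_condExp.measurable.mul
        stronglyMeasurable_condExp.measurable)] at hint
  rw [measureReal_inter_fiber_eq_mul_condExp hW ((hU hs).inter (hV ht)),
    measureReal_inter_fiber_eq_mul_condExp hW (hU hs),
    measureReal_inter_fiber_eq_mul_condExp hW (hV ht), hint]
  ring

variable [MeasurableSingletonClass α] [MeasurableSingletonClass β]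

lemma ProbabilityTheory.CondIndepFun.map_prod_singleton_mul
    (hci : CondIndepFun (mγ.comap W) hW.comap_le U V μ) (hU : Measurable U) (hV : Measurable V)
    {f : α → γ} {g : β → γ} (hWU : ∀ ω, W ω = f (U ω)) (hWV : ∀ ω, W ω = g (V ω)) (ω₀ : Ω) :
    μ.map (fun ω => (U ω, V ω)) {(U ω₀, V ω₀)} * μ.map W {W ω₀} =
      μ.map U {U ω₀} * μ.map V {V ω₀} := by
  have hUF : U ⁻¹' {U ω₀} ∩ W ⁻¹' {W ω₀} = U ⁻¹' {U ω₀} :=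
    Set.inter_eq_left.2 fun ω (h : U ω = U ω₀) => show W ω = W ω₀ by rw [hWU, hWU ω₀, h]
  have hVF : V ⁻¹' {V ω₀} ∩ W ⁻¹' {W ω₀} = V ⁻¹' {V ω₀} :=
    Set.inter_eq_left.2 fun ω (h : V ω = V ω₀) => show W ω = W ω₀ by rw [hWV, hWV ω₀, h]
  have hUVF : U ⁻¹' {U ω₀} ∩ V ⁻¹' {V ω₀} ∩ W ⁻¹' {W ω₀} = U ⁻¹' {U ω₀} ∩ V ⁻¹' {V ω₀} :=
    Set.inter_eq_left.2 (Set.inter_subset_left.trans (Set.inter_eq_left.1 hUF))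
  have key := hci.measureReal_inter_fiber_mul hW hU hV (measurableSet_singleton (U ω₀))
    (measurableSet_singleton (V ω₀)) ω₀
  rw [hUF, hVF, hUVF, ← Set.mk_preimage_prod, Set.singleton_prod_singleton] at key
  rw [Measure.map_apply (hU.prodMk hV) (measurableSet_singleton _),
    Measure.map_apply hW (measurableSet_singleton _),
    Measure.map_apply hU (measurableSet_singleton _),
    Measure.map_apply hV (measurableSet_singleton _)]
  simp only [measureReal_def, ← ENNReal.toReal_mul] at key
  exact (ENNReal.toReal_eq_toReal_iff' (by finiteness) (by finiteness)).1 key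

end CondIndep

lemma ProbabilityTheory.CondIndepFun.measureEntropy_map_prod_add {Ω α β γ : Type*}
    [MeasurableSpace Ω] [StandardBorelSpace Ω] {μ : Measure Ω} [IsProbabilityMeasure μ]
    [MeasurableSpace α] [Countable α] [MeasurableSingletonClass α]
    [MeasurableSpace β] [Countable β] [MeasurableSingletonClass β]
    [mγ : MeasurableSpace γ] [Countable γ] [MeasurableSingletonClass γ]
    {U : Ω → α} {V : Ω → β} {W : Ω → γ} (hW : Measurable W)
    (hci : CondIndepFun (mγ.comap W) hW.comap_le U V μ) (hU : Measurable U) (hV : Measurable V)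
    {f : α → γ} {g : β → γ} (hWU : ∀ ω, W ω = f (U ω)) (hWV : ∀ ω, W ω = g (V ω)) :
    measureEntropy (μ.map fun ω => (U ω, V ω)) + measureEntropy (μ.map W) =
      measureEntropy (μ.map U) + measureEntropy (μ.map V) := by
  rw [measureEntropy_map_add_eq_lintegral (hU.prodMk hV) hW,
    measureEntropy_map_add_eq_lintegral hU hV]
  simp_rw [hci.map_prod_singleton_mul hW hU hV hWU hWV]

theorem ruzsa_covering_shannonEntropy_general
    {G : Type*} [AddCommGroup G] [Countable G]
    [MeasurableSpace G] [MeasurableSingletonClass G]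
    {Ω₀ : Type*} [MeasurableSpace Ω₀] (P₀ : Measure Ω₀) [IsProbabilityMeasure P₀]
    {Ω : Type*} [MeasurableSpace Ω] [StandardBorelSpace Ω]
    (P : Measure Ω) [IsProbabilityMeasure P]
    (X Y : Ω₀ → G) (hX : Measurable X) (hY : Measurable Y) (hindep : IndepFun X Y P₀)
    (X₁ Y₁ X₂ Y₂ : Ω → G)
    (hX₁ : Measurable X₁) (hY₁ : Measurable Y₁)
    (hX₂ : Measurable X₂) (hY₂ : Measurable Y₂)
    (hW : Measurable (fun ω => X₁ ω + Y₁ ω))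
    (hsum : ∀ ω, X₂ ω + Y₂ ω = X₁ ω + Y₁ ω)
    (hid₁ : IdentDistrib (fun ω => (X₁ ω, Y₁ ω)) (fun ω => (X ω, Y ω)) P P₀)
    (hid₂ : IdentDistrib (fun ω => (X₂ ω, Y₂ ω)) (fun ω => (X ω, Y ω)) P P₀)
    (hci : CondIndepFun (MeasurableSpace.comap (fun ω => X₁ ω + Y₁ ω) inferInstance)
      hW.comap_le (fun ω => (X₁ ω, Y₁ ω)) (fun ω => (X₂ ω, Y₂ ω)) P)
    (hfX : FiniteSent P₀ X) (hfY : FiniteSent P₀ Y) :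
    condSent P (fun ω => (X₁ ω, X₂ ω, Y₁ ω)) Y₂ =
      2 * sent P₀ X + sent P₀ Y - sent P₀ (X + Y) := by
  have hU := hX₁.prodMk hY₁
  have hV := hX₂.prodMk hY₂
  have hpair : measureEntropy (P₀.map fun ω => (X ω, Y ω)) =
      measureEntropy (P₀.map X) + measureEntropy (P₀.map Y) :=
    hindep.measureEntropy_map_prod hX hY
  have hquad : measureEntropy (P.map fun ω => ((X₁ ω, X₂ ω, Y₁ ω), Y₂ ω)) =
      measureEntropy (P.map fun ω => ((X₁ ω, Y₁ ω), (X₂ ω, Y₂ ω))) := by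
    rw [← measureEntropy_map_of_injective _ (e := fun t : (G × G) × G × G =>
        ((t.1.1, t.2.1, t.1.2), t.2.2)) (by intro _ _ h; simp_all [Prod.ext_iff]),
      Measure.map_map (measurable_of_countable _) (hU.prodMk hV)]
    rfl
  have hsumW : P.map (fun ω => X₁ ω + Y₁ ω) = P₀.map (X + Y) :=
    (hid₁.comp (measurable_of_countable fun z : G × G => z.1 + z.2)).map_eq
  have hcond := hci.measureEntropy_map_prod_add hW hU hV (f := fun z => z.1 + z.2)
    (g := fun z => z.1 + z.2) (fun _ => rfl) fun ω => (hsum ω).symm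
  rw [hid₁.map_eq, hid₂.map_eq, hpair, ← hquad, hsumW] at hcond
  have hY₂' : P.map Y₂ = P₀.map Y := (hid₂.comp measurable_snd).map_eq
  have hHXY := ENNReal.add_ne_top.2 ⟨hfX.measureEntropy_ne_top, hfY.measureEntropy_ne_top⟩
  simp only [condSent, sent_eq_toReal_measureEntropy, hY₂',
    ENNReal.toReal_eq_add_sub_of_add_eq hcond hHXY hHXY,
    ENNReal.toReal_add hfX.measureEntropy_ne_top hfY.measureEntropy_ne_top]
  ring

/-- **Ruzsa covering lemma for Shannon entropy.**
Suppose `X, Y` are independent discrete random variables taking values in a discrete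
abelian group, with finite Shannon entropies, and `(X₁,Y₁)`, `(X₂,Y₂)` are versions of
`(X,Y)` that are conditionally independent given `X+Y` (each pair is distributed as
`(X,Y)`, the sums `Xᵢ + Yᵢ` agree, and the two pairs are conditionally independent
given this common sum).  Then `H(X₁, X₂, Y₁ | Y₂) = 2H(X) + H(Y) - H(X+Y)`. -/
theorem ruzsa_covering_shannonEntropy
    {G : Type*} [AddCommGroup G] [Countable G]
    [MeasurableSpace G] [MeasurableSingletonClass G]
    {Ω₀ : Type*} [MeasurableSpace Ω₀] (P₀ : Measure Ω₀) [IsProbabilityMeasure P₀]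
    {Ω : Type*} [MeasurableSpace Ω] [StandardBorelSpace Ω]
    (P : Measure Ω) [IsProbabilityMeasure P]
    (X Y : Ω₀ → G) (hX : Measurable X) (hY : Measurable Y) (hindep : IndepFun X Y P₀)
    (X₁ Y₁ X₂ Y₂ : Ω → G)
    (hX₁ : Measurable X₁) (hY₁ : Measurable Y₁)
    (hX₂ : Measurable X₂) (hY₂ : Measurable Y₂)
    (hW : Measurable (fun ω => X₁ ω + Y₁ ω))
    (hsum : ∀ ω, X₂ ω + Y₂ ω = X₁ ω + Y₁ ω)
    (hid₁ : IdentDistrib (fun ω => (X₁ ω, Y₁ ω)) (fun ω => (X ω, Y ω)) P P₀)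
    (hid₂ : IdentDistrib (fun ω => (X₂ ω, Y₂ ω)) (fun ω => (X ω, Y ω)) P P₀)
    (hci : CondIndepFun (MeasurableSpace.comap (fun ω => X₁ ω + Y₁ ω) inferInstance)
      hW.comap_le (fun ω => (X₁ ω, Y₁ ω)) (fun ω => (X₂ ω, Y₂ ω)) P)
    (hfX : FiniteSent P₀ X) (hfY : FiniteSent P₀ Y)
    (hfXY : FiniteSent P₀ (X + Y))
    (hfJ : FiniteSent P (fun ω => ((X₁ ω, X₂ ω, Y₁ ω), Y₂ ω)))
    (hfY₂ : FiniteSent P Y₂) :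
    condSent P (fun ω => (X₁ ω, X₂ ω, Y₁ ω)) Y₂ =
      2 * sent P₀ X + sent P₀ Y - sent P₀ (X + Y) :=
  ruzsa_covering_shannonEntropy_general P₀ P X Y hX hY hindep X₁ Y₁ X₂ Y₂ hX₁ hY₁ hX₂ hY₂ hW hsum
    hid₁ hid₂ hci hfX hfY
end
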